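/- arXiv:2009.12454 — 10 statements merged into one kernel-verified Lean document; each statement's English description precedes it below -/
import Mathlib

section
/- Let H = {h_1 = 1, h_2, …, h_m} be as in the context. The map ψ_H is additive and multiplicative: ψ_H(s + t) = ψ_H(s) + ψ_H(t) and ψ_H(s·t) = ψ_H(s)·ψ_H(t) for all s, t ∈ T; moreover ψ_H(1_T) = e_H. (Proposition 2.1(i).) -/
/-!
The elements `β_{h_i}(1_S)` are central idempotents, so the `e_i` are central idempotents, and
they are pairwise orthogonal because for `i < j` the product defining `e_j` contains the factor
`1 - β_{h_i}(1_S)`, which annihilates `e_i`. Multiplying two sums `∑ aᵢ eᵢ` and `∑ bᵢ eᵢ` over a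
family of central orthogonal idempotents therefore gives `∑ aᵢ bᵢ eᵢ`, so `ψ_H` inherits
multiplicativity from the `β_{h_i}`. Finally `β_{h_i}(1_S) e_i = e_i`, whence `ψ_H(1_S) = ψ_H(1)`.
-/

open Finset

theorem map_mem_center {F M N : Type*} [Semigroup M] [Semigroup N] [EquivLike F M N]
    [MulEquivClass F M N] (g : F) {z : M} (hz : z ∈ Set.center M) : g z ∈ Set.center N := by
  refine Semigroup.mem_center_iff.mpr fun y => ?_
  obtain ⟨x, rfl⟩ := EquivLike.surjective g y
  rw [← map_mul, Semigroup.mem_center_iff.mp hz, map_mul]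

theorem sum_mul_sum_of_orthogonalIdempotents {R ι : Type*} [Semiring R] {e : ι → R}
    (he : OrthogonalIdempotents e) (hc : ∀ i, e i ∈ Set.center R) (s : Finset ι) (a b : ι → R) :
    (∑ i ∈ s, a i * e i) * (∑ i ∈ s, b i * e i) = ∑ i ∈ s, a i * b i * e i := by
  have hmul : ∀ i j, a i * e i * (b j * e j) = a i * b j * (e i * e j) := fun i j => by
    rw [mul_assoc, ← mul_assoc (e i), ← Semigroup.mem_center_iff.mp (hc i) (b j)]
    simp only [mul_assoc]
  rw [sum_mul_sum]
  refine sum_congr rfl fun i hi => ?_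
  rw [sum_eq_single_of_mem i hi fun j _ hji => by rw [hmul, he.ortho hji.symm, mul_zero],
    hmul, (he.idem i).eq]

section Disjointify

variable {R : Type*} {f : ℕ → R}

theorem orthogonalIdempotents_prod_one_sub_mul [CommRing R] (hf : ∀ i, IsIdempotentElem (f i)) :
    OrthogonalIdempotents fun i => ((List.range i).map fun j => 1 - f j).prod * f i := by
  set e : ℕ → R := fun i => ((List.range i).map fun j => 1 - f j).prod * f i
  have hlt : ∀ i j, i < j → e i * e j = 0 := fun i j hij => by
    have hdvd : f i * (1 - f i) ∣ e i * e j :=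
      mul_dvd_mul (dvd_mul_left _ _) <| (List.dvd_prod <| List.mem_map.mpr
        ⟨i, List.mem_range.mpr hij, rfl⟩).mul_right _
    rwa [(hf i).mul_one_sub_self, zero_dvd_iff] at hdvd
  refine ⟨fun i => ?_, fun i j hij => ?_⟩
  · refine (List.prod_induction _ (fun _ _ => IsIdempotentElem.mul) IsIdempotentElem.one ?_).mul
      (hf i)
    simpa using fun j _ => (hf j).one_sub
  · rcases hij.lt_or_gt with hij | hij
    · exact hlt i j hij
    · rw [mul_comm]
      exact hlt j i hij

variable [Ring R]

theorem orthogonalIdempotents_prod_one_sub_mul_of_mem_center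
    (hf : ∀ i, IsIdempotentElem (f i)) (hc : ∀ i, f i ∈ Set.center R) :
    OrthogonalIdempotents fun i => ((List.range i).map fun j => 1 - f j).prod * f i := by
  let F : ℕ → Subring.center R := fun i => ⟨f i, hc i⟩
  convert (orthogonalIdempotents_prod_one_sub_mul (f := F) fun i => Subtype.ext (hf i)).map
    (Subring.center R).subtype using 1
  funext i
  simp [List.map_map, Function.comp_def, F]

theorem prod_one_sub_mul_mem_center (hc : ∀ i, f i ∈ Set.center R) (i : ℕ) :
    ((List.range i).map fun j => 1 - f j).prod * f i ∈ Set.center R :=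
  Set.mul_mem_center (Subring.list_prod_mem (Subring.center R) (by
    simpa using fun j _ => sub_mem (one_mem (Subring.center R)) (hc j))) (hc i)

end Disjointify

theorem stmt_0_general {T : Type*} [Ring T] {G : Type*} [Group G]
    (β : G →* RingAut T) (oneS : T)
    (hcentral : ∀ t : T, oneS * t = t * oneS)
    (hidem : oneS * oneS = oneS)
    (m : ℕ) (h : ℕ → G)
    (e : ℕ → T)
    (he : ∀ i, e i = (((List.range i).map fun j => 1 - β (h j) oneS).prod) * β (h i) oneS)
    (ψ : T → T) (hψ : ∀ t, ψ t = ∑ i ∈ Finset.range m, β (h i) t * e i)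
    (eH : T) (heH : eH = ψ oneS) :
    (∀ s t : T, ψ (s + t) = ψ s + ψ t) ∧
    (∀ s t : T, ψ (s * t) = ψ s * ψ t) ∧
    ψ 1 = eH := by
  have hf_idem : ∀ j, IsIdempotentElem (β (h j) oneS) := fun j => by
    simp only [IsIdempotentElem, ← map_mul, hidem]
  have hf_center : ∀ j, β (h j) oneS ∈ Set.center T := fun j =>
    map_mem_center (β (h j)) (Semigroup.mem_center_iff.mpr fun t => (hcentral t).symm)
  have he_ortho : OrthogonalIdempotents e := by
    rw [funext he]
    exact orthogonalIdempotents_prod_one_sub_mul_of_mem_center hf_idem hf_center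
  have he_center : ∀ i, e i ∈ Set.center T := fun i => he i ▸ prod_one_sub_mul_mem_center hf_center i
  have hfe : ∀ i, β (h i) oneS * e i = e i := fun i => by
    rw [he, ← mul_assoc, ← Semigroup.mem_center_iff.mp (hf_center i), mul_assoc, (hf_idem i).eq]
  refine ⟨fun s t => ?_, fun s t => ?_, ?_⟩
  · simp only [hψ, map_add, add_mul, sum_add_distrib]
  · simp only [hψ, sum_mul_sum_of_orthogonalIdempotents he_ortho he_center, map_mul]
  · simp only [heH, hψ, map_one, one_mul, hfe]

/-- Proposition 2.1(i): ψ_H is additive and multiplicative, and ψ_H(1_T) = e_H. -/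
theorem stmt_0 {T : Type*} [Ring T] {G : Type*} [Group G]
    (β : G →* RingAut T) (oneS : T)
    (hcentral : ∀ t : T, oneS * t = t * oneS)
    (hidem : oneS * oneS = oneS)
    (m : ℕ) (hm : 0 < m) (h : ℕ → G) (h1 : h 0 = 1)
    (hinj : ∀ i < m, ∀ j < m, h i = h j → i = j)
    (hmulc : ∀ i < m, ∀ j < m, ∃ k < m, h i * h j = h k)
    (e : ℕ → T)
    (he : ∀ i, e i = (((List.range i).map fun j => 1 - β (h j) oneS).prod) * β (h i) oneS)
    (ψ : T → T) (hψ : ∀ t, ψ t = ∑ i ∈ Finset.range m, β (h i) t * e i)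
    (eH : T) (heH : eH = ψ oneS) :
    (∀ s t : T, ψ (s + t) = ψ s + ψ t) ∧
    (∀ s t : T, ψ (s * t) = ψ s * ψ t) ∧
    ψ 1 = eH :=
  stmt_0_general β oneS hcentral hidem m h e he ψ hψ eH heH
end

section
/- For every t ∈ T one has ψ_H(t)·1_S = t·1_S (in particular the restriction of ψ_H to the ideal S = T·1_S is injective), and the element e_H = ψ_H(1_S) is a central idempotent of T. (Proposition 2.1(iii),(iv).) -/
/-!
Write `f j := β_{h_j}(1_S)`, a family of central idempotents, and `P n := ∏_{j<n} (1 - f j)`.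
Then `e_i = P i * f i = P i - P (i+1)`, so `e_H = ∑_{i<m} f i * e i = ∑_{i<m} e i` telescopes to
`1 - P m`, a central idempotent. Since `f 0 = 1_S` and `P i` contains the factor `1 - 1_S` for
`i ≥ 1`, only the term `i = 0` of `ψ_H(t) * 1_S` survives, and it equals `t * 1_S`.
-/

open Finset

theorem commute_map_of_forall_commute {R F : Type*} [Mul R] [EquivLike F R R]
    [MulEquivClass F R R] {a : R} (ha : ∀ t, Commute a t) (σ : F) (t : R) :
    Commute (σ a) t := by
  simpa using (ha (EquivLike.inv σ t)).map σ

section ComplementProd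

variable {R : Type*} [Ring R] (f : ℕ → R)

def complementProd (n : ℕ) : R := ((List.range n).map fun j => 1 - f j).prod

@[simp]
theorem complementProd_zero : complementProd f 0 = 1 := rfl

theorem complementProd_succ (n : ℕ) :
    complementProd f (n + 1) = complementProd f n * (1 - f n) :=
  List.prod_range_succ _ n

theorem complementProd_mul_eq_sub (n : ℕ) :
    complementProd f n * f n = complementProd f n - complementProd f (n + 1) := by
  rw [complementProd_succ, mul_sub, mul_one, sub_sub_cancel]

theorem sum_complementProd_mul (m : ℕ) :
    ∑ i ∈ range m, complementProd f i * f i = 1 - complementProd f m := by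
  simp only [complementProd_mul_eq_sub, sum_range_sub', complementProd_zero]

variable {f}

theorem commute_complementProd (hc : ∀ j t, Commute (f j) t) (n : ℕ) (t : R) :
    Commute (complementProd f n) t :=
  Commute.list_prod_left _ _ fun _ hx => by
    obtain ⟨j, -, rfl⟩ := List.mem_map.1 hx
    exact (Commute.one_left t).sub_left (hc j t)

theorem isIdempotentElem_complementProd (hc : ∀ j t, Commute (f j) t)
    (hf : ∀ j, IsIdempotentElem (f j)) (n : ℕ) :
    IsIdempotentElem (complementProd f n) := by
  induction n with
  | zero => exact IsIdempotentElem.one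
  | succ n ih =>
    rw [complementProd_succ]
    exact ih.mul_of_commute (commute_complementProd hc n _) (hf n).one_sub

theorem complementProd_mul_eq_zero (hc : ∀ j t, Commute (f j) t) {i : ℕ}
    (hi : IsIdempotentElem (f i)) {n : ℕ} (hin : i < n) :
    complementProd f n * f i = 0 := by
  induction n with
  | zero => omega
  | succ n ih =>
    rw [complementProd_succ]
    rcases Nat.lt_succ_iff_lt_or_eq.1 hin with hlt | rfl
    · rw [mul_assoc, ← (hc i _).eq, ← mul_assoc, ih hlt, zero_mul]
    · rw [mul_assoc, hi.one_sub_mul_self, mul_zero]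

theorem sum_mul_complementProd_mul_mul_zero (hc : ∀ j t, Commute (f j) t)
    (h0 : IsIdempotentElem (f 0)) (a : ℕ → R) {m : ℕ} (hm : 0 < m) :
    (∑ i ∈ range m, a i * (complementProd f i * f i)) * f 0 = a 0 * f 0 := by
  rw [sum_mul, sum_eq_single_of_mem 0 (mem_range.2 hm)]
  · rw [complementProd_zero, one_mul, mul_assoc, h0.eq]
  · intro i _ hi
    rw [mul_assoc, mul_assoc, (hc i _).eq, ← mul_assoc (complementProd f i),
      complementProd_mul_eq_zero hc h0 (Nat.pos_of_ne_zero hi), zero_mul, mul_zero]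

end ComplementProd

theorem stmt_1_general {T : Type*} [Ring T] {G : Type*} [Group G]
    (β : G →* RingAut T) (oneS : T)
    (hcentral : ∀ t : T, oneS * t = t * oneS)
    (hidem : oneS * oneS = oneS)
    (m : ℕ) (hm : 0 < m) (h : ℕ → G) (h1 : h 0 = 1)
    (e : ℕ → T)
    (he : ∀ i, e i = (((List.range i).map fun j => 1 - β (h j) oneS).prod) * β (h i) oneS)
    (ψ : T → T) (hψ : ∀ t, ψ t = ∑ i ∈ Finset.range m, β (h i) t * e i)
    (eH : T) (heH : eH = ψ oneS) :
    (∀ t : T, ψ t * oneS = t * oneS) ∧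
    (∀ x y : T, ψ (x * oneS) = ψ (y * oneS) → x * oneS = y * oneS) ∧
    (∀ t : T, eH * t = t * eH) ∧
    eH * eH = eH := by
  let f : ℕ → T := fun j => β (h j) oneS
  have hcf : ∀ j t, Commute (f j) t := fun j => commute_map_of_forall_commute hcentral (β (h j))
  have hif : ∀ j, IsIdempotentElem (f j) := fun j => IsIdempotentElem.map hidem (β (h j))
  have he' : ∀ i, e i = complementProd f i * f i := he
  have hψ_mul : ∀ t, ψ t * oneS = t * oneS := fun t => by
    have key := sum_mul_complementProd_mul_mul_zero hcf (hif 0) (fun i => β (h i) t) hm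
    simpa only [hψ, he', f, h1, map_one, RingAut.one_apply] using key
  have heH' : eH = 1 - complementProd f m := by
    rw [heH, hψ, ← sum_complementProd_mul]
    refine sum_congr rfl fun i _ => ?_
    rw [he', ← mul_assoc, (hcf i _).eq, mul_assoc, (hif i).eq]
  have hψ_mul_mul : ∀ t, ψ (t * oneS) * oneS = t * oneS := fun t => by
    rw [hψ_mul, mul_assoc, hidem]
  refine ⟨hψ_mul, fun x y hxy => ?_, fun t => ?_, ?_⟩
  · rw [← hψ_mul_mul x, hxy, hψ_mul_mul]
  · rw [heH']
    exact ((Commute.one_left t).sub_left (commute_complementProd hcf m t)).eq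
  · rw [heH']
    exact (isIdempotentElem_complementProd hcf hif m).one_sub.eq

/-- Proposition 2.1(iii),(iv): ψ_H(t)·1_S = t·1_S (hence ψ_H is injective on S = T·1_S),
and e_H is a central idempotent of T. -/
theorem stmt_1 {T : Type*} [Ring T] {G : Type*} [Group G]
    (β : G →* RingAut T) (oneS : T)
    (hcentral : ∀ t : T, oneS * t = t * oneS)
    (hidem : oneS * oneS = oneS)
    (m : ℕ) (hm : 0 < m) (h : ℕ → G) (h1 : h 0 = 1)
    (hinj : ∀ i < m, ∀ j < m, h i = h j → i = j)
    (hmulc : ∀ i < m, ∀ j < m, ∃ k < m, h i * h j = h k)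
    (e : ℕ → T)
    (he : ∀ i, e i = (((List.range i).map fun j => 1 - β (h j) oneS).prod) * β (h i) oneS)
    (ψ : T → T) (hψ : ∀ t, ψ t = ∑ i ∈ Finset.range m, β (h i) t * e i)
    (eH : T) (heH : eH = ψ oneS) :
    (∀ t : T, ψ t * oneS = t * oneS) ∧
    (∀ x y : T, ψ (x * oneS) = ψ (y * oneS) → x * oneS = y * oneS) ∧
    (∀ t : T, eH * t = t * eH) ∧
    eH * eH = eH :=
  stmt_1_general β oneS hcentral hidem m hm h h1 e he ψ hψ eH heH
end

section
/- If s ∈ S^{α_H}, i.e. s = s·1_S and β_h(s)·1_S = s·1_h for all h ∈ H, then β_h(ψ_H(s)) = ψ_H(s) for all h ∈ H; that is, ψ_H maps the invariants S^{α_H} into the fixed ring T^{β_H}. (Proposition 2.1(v).) -/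
/-!
Write `f j = β_{h_j}(1_S)`, so `e_i = (1 - f 0) ⋯ (1 - f (i-1)) · f i` and `1 = ∑ e_i + P` with
`P = ∏ (1 - f j)`. Since the `f j` are commuting central idempotents, an element `w` of `T` is
determined by the products `w · f j` and `w · P`. For `s ∈ S^{α_H}` the relation
`β_{h_j}(s) f i = β_{h_i}(s) f j` gives `ψ_H(s) f j = β_{h_j}(s)` and `ψ_H(s) P = 0`. Left
multiplication by `h_k` permutes `H`, so `β_{h_k}(ψ_H(s))` has the same products with every `f j`
and with `P`, hence equals `ψ_H(s)`.
-/

open Finset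

section PartialProducts

variable {R : Type*} [Ring R] (f : ℕ → R)

/-- With `f j = β_{h_j}(1_S)`, `prodOneSub f i * f i` is the paper's `e_{i+1}`: the enumeration
here starts at `0`. -/
def prodOneSub (i : ℕ) : R := ((List.range i).map fun j => 1 - f j).prod

@[simp]
lemma prodOneSub_zero : prodOneSub f 0 = 1 := rfl

lemma prodOneSub_succ (i : ℕ) : prodOneSub f (i + 1) = prodOneSub f i * (1 - f i) :=
  List.prod_range_succ _ i

lemma commute_prodOneSub {t : R} (ht : ∀ j, Commute (f j) t) (i : ℕ) :
    Commute (prodOneSub f i) t :=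
  Commute.list_prod_left _ _ fun x hx => by
    obtain ⟨j, -, rfl⟩ := List.mem_map.mp hx
    exact (Commute.one_left t).sub_left (ht j)

lemma mul_prodOneSub_of_forall_mul_eq_zero {w : R} {i : ℕ} (hw : ∀ j < i, w * f j = 0) :
    w * prodOneSub f i = w := by
  induction i with
  | zero => simp
  | succ i ih =>
    rw [prodOneSub_succ, ← mul_assoc, ih fun j hj => hw j (by omega), mul_sub, mul_one,
      hw i (by omega), sub_zero]

lemma mul_prodOneSub_eq_zero {i j : ℕ} (hcomm : ∀ k, Commute (f j) (f k))
    (hidem : IsIdempotentElem (f j)) (hji : j < i) : f j * prodOneSub f i = 0 := by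
  induction i, hji using Nat.le_induction with
  | base =>
    rw [prodOneSub_succ, ← mul_assoc, ← (commute_prodOneSub f (fun k => (hcomm k).symm) j).eq,
      mul_assoc, hidem.mul_one_sub_self, mul_zero]
  | succ i _ ih => rw [prodOneSub_succ, ← mul_assoc, ih, zero_mul]

lemma mul_prodOneSub_eq_zero_of_mul_eq {i j : ℕ} (hcomm : ∀ k, Commute (f j) (f k))
    (hidem : IsIdempotentElem (f j)) (hji : j < i) {w : R} (hw : w * f j = w) :
    w * prodOneSub f i = 0 := by
  rw [← hw, mul_assoc, mul_prodOneSub_eq_zero f hcomm hidem hji, mul_zero]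

lemma sum_prodOneSub_mul (m : ℕ) :
    ∑ i ∈ range m, prodOneSub f i * f i = 1 - prodOneSub f m := by
  have htelescope (i : ℕ) : prodOneSub f i * f i = prodOneSub f i - prodOneSub f (i + 1) := by
    rw [prodOneSub_succ, mul_sub, mul_one, sub_sub_cancel]
  simp only [htelescope, sum_range_sub', prodOneSub_zero]

lemma eq_of_mul_eq_of_mul_prodOneSub_eq {m : ℕ} {u v : R} (hf : ∀ j < m, v * f j = u * f j)
    (hP : v * prodOneSub f m = u * prodOneSub f m) : v = u := by
  have hsub : (v - u) * prodOneSub f m = v - u :=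
    mul_prodOneSub_of_forall_mul_eq_zero f fun j hj => by rw [sub_mul, hf j hj, sub_self]
  rw [← sub_eq_zero, ← hsub, sub_mul, hP, sub_self]

lemma sum_mul_prodOneSub_mul_mul_prodOneSub (hcomm : ∀ j k, Commute (f j) (f k))
    (hidem : ∀ j, IsIdempotentElem (f j)) (a : ℕ → R) (m : ℕ) :
    (∑ i ∈ range m, a i * (prodOneSub f i * f i)) * prodOneSub f m = 0 := by
  rw [sum_mul]
  refine sum_eq_zero fun i hi => ?_
  refine mul_prodOneSub_eq_zero_of_mul_eq f (hcomm i) (hidem i) (mem_range.mp hi) ?_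
  rw [mul_assoc, mul_assoc, (hidem i).eq]

lemma sum_mul_prodOneSub_mul_mul (hcomm : ∀ j k, Commute (f j) (f k))
    (hidem : ∀ j, IsIdempotentElem (f j)) {m : ℕ} {a : ℕ → R}
    (hsymm : ∀ i < m, ∀ j < m, a j * f i = a i * f j) (hfix : ∀ j, a j * f j = a j)
    {l : ℕ} (hl : l < m) :
    (∑ i ∈ range m, a i * (prodOneSub f i * f i)) * f l = a l := by
  have hterm : ∀ i ∈ range m,
      a i * (prodOneSub f i * f i) * f l = a l * (prodOneSub f i * f i) := by
    intro i hi
    have hPf : Commute (prodOneSub f i * f i) (f l) :=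
      (commute_prodOneSub f (fun k => hcomm k l) i).mul_left (hcomm i l)
    calc a i * (prodOneSub f i * f i) * f l
        = a i * f l * (prodOneSub f i * f i) := by rw [mul_assoc, hPf.eq, ← mul_assoc]
      _ = a l * (f i * prodOneSub f i * f i) := by
        rw [hsymm l hl i (mem_range.mp hi), mul_assoc, mul_assoc]
      _ = a l * (prodOneSub f i * f i) := by
        rw [(commute_prodOneSub f (fun k => hcomm k i) i).symm.eq, mul_assoc, (hidem i).eq]
  rw [sum_mul, sum_congr rfl hterm, ← mul_sum, sum_prodOneSub_mul, mul_sub, mul_one,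
    mul_prodOneSub_eq_zero_of_mul_eq f (hcomm l) (hidem l) hl (hfix l), sub_zero]

end PartialProducts

lemma exists_mul_eq_of_forall_mul_mem {M : Type*} [Mul M] [IsLeftCancelMul M] {m : ℕ}
    {h : ℕ → M} (hmul : ∀ i < m, ∀ j < m, ∃ k < m, h i * h j = h k) {i j : ℕ} (hi : i < m)
    (hj : j < m) : ∃ l < m, h i * h l = h j := by
  classical
  have hmaps : Set.MapsTo (h i * ·) ((range m).image h) ((range m).image h) := by
    simp only [Set.MapsTo, coe_image, coe_range, Set.mem_image, Set.mem_Iio]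
    rintro _ ⟨l, hl, rfl⟩
    obtain ⟨k, hk, hkl⟩ := hmul i hi l hl
    exact ⟨k, hk, hkl.symm⟩
  obtain ⟨x, hx, hxj⟩ := surjOn_of_injOn_of_card_le _ hmaps
    (fun _ _ _ _ hxy => mul_left_cancel hxy) le_rfl (mem_image_of_mem h (mem_range.mpr hj))
  obtain ⟨l, hl, rfl⟩ := mem_image.mp hx
  exact ⟨l, mem_range.mp hl, hxj⟩

section GroupAction

variable {T G : Type*} [Ring T] [Group G]

lemma commute_ringAut_apply (σ : RingAut T) {x : T} (hx : ∀ t, Commute x t) (t : T) :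
    Commute (σ x) t := by
  simpa using (hx (σ.symm t)).map σ

lemma RingAut.apply_apply_of_mul_eq (β : G →* RingAut T) {g g' g'' : G} (hg : g * g' = g'')
    (x : T) : β g (β g' x) = β g'' x := by
  rw [← RingAut.mul_apply, ← map_mul, hg]

lemma map_mul_map_comm_of_invariant (β : G →* RingAut T) {e s : T} (he : ∀ t, Commute e t)
    (hs : s * e = s) {g g' g'' : G} (hg : g * g' = g'') (hinv : β g' s * e = s * (β g' e * e)) :
    β g'' s * β g e = β g s * β g'' e := by
  have h' : β g' s * e = s * β g' e := by rw [hinv, ← (he _).eq, ← mul_assoc, hs]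
  simpa only [map_mul, RingAut.apply_apply_of_mul_eq β hg] using congrArg (β g) h'

/-- The map `ψ_H`, for the enumeration `h 0, …, h (m - 1)` of `H` and `e = 1_S`. -/
def psi (β : G →* RingAut T) (e : T) (h : ℕ → G) (m : ℕ) (t : T) : T :=
  ∑ i ∈ range m, β (h i) t * (prodOneSub (fun j => β (h j) e) i * β (h i) e)

variable (β : G →* RingAut T) {e : T} {h : ℕ → G} {m : ℕ}

lemma psi_mul_prodOneSub (he : ∀ t, Commute e t) (hidem : IsIdempotentElem e) (t : T) :
    psi β e h m t * prodOneSub (fun j => β (h j) e) m = 0 :=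
  sum_mul_prodOneSub_mul_mul_prodOneSub _ (fun _ _ => commute_ringAut_apply _ he _)
    (fun _ => hidem.map _) _ m

lemma psi_mul_of_invariant (he : ∀ t, Commute e t) (hidem : IsIdempotentElem e)
    (hmul : ∀ i < m, ∀ j < m, ∃ k < m, h i * h j = h k) {s : T} (hs : s * e = s)
    (hinv : ∀ i < m, β (h i) s * e = s * (β (h i) e * e)) {l : ℕ} (hl : l < m) :
    psi β e h m s * β (h l) e = β (h l) s := by
  refine sum_mul_prodOneSub_mul_mul _ (fun _ _ => commute_ringAut_apply _ he _)
    (fun _ => hidem.map _) (fun i hi j hj => ?_) (fun j => by rw [← map_mul, hs]) hl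
  obtain ⟨l, hl, hil⟩ := exists_mul_eq_of_forall_mul_mem hmul hi hj
  exact map_mul_map_comm_of_invariant β he hs hil (hinv l hl)

lemma map_psi_mul_of_invariant (he : ∀ t, Commute e t) (hidem : IsIdempotentElem e)
    (hmul : ∀ i < m, ∀ j < m, ∃ k < m, h i * h j = h k) {s : T} (hs : s * e = s)
    (hinv : ∀ i < m, β (h i) s * e = s * (β (h i) e * e)) {j k : ℕ} (hj : j < m) (hk : k < m) :
    β (h k) (psi β e h m s) * β (h j) e = β (h j) s := by
  obtain ⟨l, hl, hkl⟩ := exists_mul_eq_of_forall_mul_mem hmul hk hj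
  rw [← RingAut.apply_apply_of_mul_eq β hkl e, ← map_mul,
    psi_mul_of_invariant β he hidem hmul hs hinv hl, RingAut.apply_apply_of_mul_eq β hkl]

lemma map_psi_mul_prodOneSub (he : ∀ t, Commute e t) (hidem : IsIdempotentElem e)
    (hmul : ∀ i < m, ∀ j < m, ∃ k < m, h i * h j = h k) {s : T} (hs : s * e = s) {k : ℕ}
    (hk : k < m) : β (h k) (psi β e h m s) * prodOneSub (fun j => β (h j) e) m = 0 := by
  rw [psi, map_sum, sum_mul]
  refine sum_eq_zero fun i hi => ?_
  obtain ⟨l, hl, hkl⟩ := hmul k hk i (mem_range.mp hi)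
  have he_i : Commute (β (h k) (prodOneSub (fun j => β (h j) e) i * β (h i) e))
      (prodOneSub (fun j => β (h j) e) m) :=
    commute_ringAut_apply _ (fun t => (commute_prodOneSub _
      (fun _ => commute_ringAut_apply _ he t) i).mul_left (commute_ringAut_apply _ he t)) _
  rw [map_mul, RingAut.apply_apply_of_mul_eq β hkl, mul_assoc, he_i.eq, ← mul_assoc,
    mul_prodOneSub_eq_zero_of_mul_eq _ (fun _ => commute_ringAut_apply _ he _) (hidem.map _) hl
      (by rw [← map_mul, hs]), zero_mul]

end GroupAction

theorem stmt_2_general {T : Type*} [Ring T] {G : Type*} [Group G]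
    (β : G →* RingAut T) (oneS : T)
    (hcentral : ∀ t : T, oneS * t = t * oneS)
    (hidem : oneS * oneS = oneS)
    (m : ℕ) (h : ℕ → G)
    (hmulc : ∀ i < m, ∀ j < m, ∃ k < m, h i * h j = h k)
    (e : ℕ → T)
    (he : ∀ i, e i = (((List.range i).map fun j => 1 - β (h j) oneS).prod) * β (h i) oneS)
    (ψ : T → T) (hψ : ∀ t, ψ t = ∑ i ∈ Finset.range m, β (h i) t * e i) :
    ∀ s : T, s * oneS = s →
      (∀ i < m, β (h i) s * oneS = s * (β (h i) oneS * oneS)) →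
      ∀ i < m, β (h i) (ψ s) = ψ s := by
  intro s hs hinv k hk
  obtain rfl : ψ = psi β oneS h m := funext fun t => by simp only [hψ, he, psi, prodOneSub]
  refine eq_of_mul_eq_of_mul_prodOneSub_eq (fun j => β (h j) oneS) (m := m) (fun j hj => ?_) ?_
  · rw [map_psi_mul_of_invariant β hcentral hidem hmulc hs hinv hj hk,
      psi_mul_of_invariant β hcentral hidem hmulc hs hinv hj]
  · rw [map_psi_mul_prodOneSub β hcentral hidem hmulc hs hk, psi_mul_prodOneSub β hcentral hidem]

/-- Proposition 2.1(v): ψ_H maps the invariants S^{α_H} into the fixed ring T^{β_H}. -/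
theorem stmt_2 {T : Type*} [Ring T] {G : Type*} [Group G]
    (β : G →* RingAut T) (oneS : T)
    (hcentral : ∀ t : T, oneS * t = t * oneS)
    (hidem : oneS * oneS = oneS)
    (m : ℕ) (hm : 0 < m) (h : ℕ → G) (h1 : h 0 = 1)
    (hinj : ∀ i < m, ∀ j < m, h i = h j → i = j)
    (hmulc : ∀ i < m, ∀ j < m, ∃ k < m, h i * h j = h k)
    (e : ℕ → T)
    (he : ∀ i, e i = (((List.range i).map fun j => 1 - β (h j) oneS).prod) * β (h i) oneS)
    (ψ : T → T) (hψ : ∀ t, ψ t = ∑ i ∈ Finset.range m, β (h i) t * e i)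
    (eH : T) (heH : eH = ψ oneS) :
    ∀ s : T, s * oneS = s →
      (∀ i < m, β (h i) s * oneS = s * (β (h i) oneS * oneS)) →
      ∀ i < m, β (h i) (ψ s) = ψ s :=
  stmt_2_general β oneS hcentral hidem m h hmulc e he ψ hψ
end

section
/- There exists a family (t_g)_{g∈G} of elements of T^{β_H} such that Σ_{g∈G} t_g·β_g(e_H) = 1_T. Consequently T^{β_H} = Σ_{g∈G} β_g(T^{β_H}·e_H), i.e. the pair (T^{β_H}, β restricted to representatives of G/H) satisfies the globalization condition (G4) for the partial action of G/H on the ideal T^{β_H}·e_H obtained by restriction of β. (Proposition 3.2.) -/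
/-!
Put `P := ∏_{h ∈ H} β_h(1_T - 1_S)`. Since `β_{h_i}(1_S)` is idempotent, the sum defining
`e_H = ψ_H(1_S)` telescopes to `e_H = 1_T - P`; as `H` is finite and closed under products,
`h ↦ kh` permutes `H`, so `P` and hence `e_H` are `H`-invariant, and by normality so is every
`β_g(e_H)`. Moreover `∏_g β_g(P) = ∏_{h ∈ H} ∏_g β_{gh}(1_T - 1_S) = 0` by the globalization
hypothesis. Ordering `G` and expanding `0 = ∏_g (1_T - β_g(e_H))` gives
`1_T = Σ_g t_g β_g(e_H)` with `t_g = ∏_{g' < g} (1_T - β_{g'}(e_H))` invariant. Finally an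
invariant `x` equals `Σ_g β_g(β_{g⁻¹}(x t_g) e_H)`.
-/

open Finset

theorem sum_mul_prod_one_sub_mul_eq {R : Type*} [CommRing R] (f : ℕ → R)
    (hf : ∀ i, IsIdempotentElem (f i)) (m : ℕ) :
    ∑ i ∈ range m, f i * ((∏ j ∈ range i, (1 - f j)) * f i) =
      1 - ∏ j ∈ range m, (1 - f j) := by
  induction m with
  | zero => simp
  | succ m ih =>
    rw [sum_range_succ, prod_range_succ, ih]
    linear_combination (∏ j ∈ range m, (1 - f j)) * (hf m).eq

theorem exists_sum_mul_eq_one_sub_prod {α R : Type*} [Fintype α] [CommRing R] (S : Subring R)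
    (x : α → R) (hx : ∀ a, x a ∈ S) :
    ∃ t : α → R, (∀ a, t a ∈ S) ∧ ∑ a, t a * x a = 1 - ∏ a, (1 - x a) := by
  let _ : LinearOrder α := LinearOrder.lift' _ (Fintype.equivFin α).injective
  refine ⟨fun a => ∏ b with b < a, (1 - x b),
    fun a => S.prod_mem fun b _ => S.sub_mem S.one_mem (hx b), ?_⟩
  rw [prod_one_sub_ordered, sub_sub_cancel]
  exact sum_congr rfl fun a _ => mul_comm _ _

theorem Finset.image_mul_left_eq_self {G : Type*} [Group G] [DecidableEq G] {s : Finset G}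
    (hs : ∀ a ∈ s, ∀ b ∈ s, a * b ∈ s) {k : G} (hk : k ∈ s) : s.image (k * ·) = s :=
  eq_of_subset_of_card_le (image_subset_iff.2 fun a ha => hs k hk a ha)
    (card_image_of_injective _ (mul_right_injective k)).ge

section FixedSubring

variable {T G : Type*} [CommRing T] [Group G] (β : G →* RingAut T)

def fixedSubring (K : Set G) : Subring T :=
  ⨅ k ∈ K, RingHom.eqLocus (β k : T →+* T) (RingHom.id T)

variable {β}

theorem mem_fixedSubring {K : Set G} {x : T} : x ∈ fixedSubring β K ↔ ∀ k ∈ K, β k x = x := by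
  simp [fixedSubring, Subring.mem_iInf]

theorem map_mem_fixedSubring {K : Set G} (hK : ∀ g, ∀ k ∈ K, g * k * g⁻¹ ∈ K) (g : G) {x : T}
    (hx : x ∈ fixedSubring β K) : β g x ∈ fixedSubring β K := by
  rw [mem_fixedSubring] at hx ⊢
  intro k hk
  have hconj : k * g = g * (g⁻¹ * k * g⁻¹⁻¹) := by group
  rw [← RingAut.mul_apply, ← map_mul, hconj, map_mul, RingAut.mul_apply, hx _ (hK _ k hk)]

variable (β)

theorem map_prod_map_of_image_mul_eq [DecidableEq G] {s : Finset G} {k : G}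
    (hk : s.image (k * ·) = s) (y : T) : β k (∏ a ∈ s, β a y) = ∏ a ∈ s, β a y := by
  conv_rhs => rw [← hk]
  rw [map_prod, prod_image fun a _ b _ => mul_left_cancel]
  simp [map_mul, RingAut.mul_apply]

theorem prod_map_prod_map_eq_zero [Fintype G] {s : Finset G} (hs : s.Nonempty) {y : T}
    (hy : ∏ g : G, β g y = 0) : ∏ g : G, β g (∏ a ∈ s, β a y) = 0 := by
  simp_rw [map_prod, ← RingAut.mul_apply, ← map_mul]
  rw [prod_comm]
  obtain ⟨a, ha⟩ := hs
  exact prod_eq_zero ha ((Equiv.prod_comp (Equiv.mulRight a) fun g => β g y).trans hy)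

theorem exists_eq_sum_map_mul_of_sum_mul_map_eq_one [Fintype G] {K : Set G}
    (hK : ∀ g, ∀ k ∈ K, g * k * g⁻¹ ∈ K) {t : G → T} (ht : ∀ g, t g ∈ fixedSubring β K)
    {e : T} (hsum : ∑ g, t g * β g e = 1) {x : T} (hx : x ∈ fixedSubring β K) :
    ∃ c : G → T, (∀ g, c g ∈ fixedSubring β K) ∧ x = ∑ g, β g (c g * e) := by
  refine ⟨fun g => β g⁻¹ (x * t g),
    fun g => map_mem_fixedSubring hK _ (mul_mem hx (ht g)), ?_⟩
  simp_rw [map_mul, ← RingAut.mul_apply, ← map_mul, mul_inv_cancel, map_one, RingAut.one_apply,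
    mul_assoc, ← mul_sum, hsum, mul_one]

end FixedSubring

theorem stmt_4_general {T : Type*} [CommRing T] {G : Type*} [Group G] [Fintype G]
    (β : G →* RingAut T) (oneS : T) (hidem : oneS * oneS = oneS)
    (hglob : ∏ g : G, (1 - β g oneS) = 0)
    (m : ℕ) (hm : 0 < m) (h : ℕ → G)
    (hinj : ∀ i < m, ∀ j < m, h i = h j → i = j)
    (hmulc : ∀ i < m, ∀ j < m, ∃ k < m, h i * h j = h k)
    (hnormal : ∀ g : G, ∀ i < m, ∃ j < m, g * h i * g⁻¹ = h j)
    (e : ℕ → T)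
    (he : ∀ i, e i = (∏ j ∈ Finset.range i, (1 - β (h j) oneS)) * β (h i) oneS)
    (ψ : T → T) (hψ : ∀ t, ψ t = ∑ i ∈ Finset.range m, β (h i) t * e i)
    (eH : T) (heH : eH = ψ oneS) :
    (∃ t : G → T, (∀ g : G, ∀ i < m, β (h i) (t g) = t g) ∧
      ∑ g : G, t g * β g eH = 1) ∧
    (∀ x : T, (∀ i < m, β (h i) x = x) →
      ∃ c : G → T, (∀ g : G, ∀ i < m, β (h i) (c g) = c g) ∧
        x = ∑ g : G, β g (c g * eH)) := by
  classical
  set H := (range m).image h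
  have hmem (x : T) : x ∈ fixedSubring β H ↔ ∀ i < m, β (h i) x = x := by
    simp [mem_fixedSubring, H]
  have hH_mul : ∀ a ∈ H, ∀ b ∈ H, a * b ∈ H := by
    simp only [H, mem_image, mem_range]
    rintro _ ⟨i, hi, rfl⟩ _ ⟨j, hj, rfl⟩
    obtain ⟨k, hk, hijk⟩ := hmulc i hi j hj
    exact ⟨k, hk, hijk.symm⟩
  have hH_normal : ∀ g, ∀ k ∈ (H : Set G), g * k * g⁻¹ ∈ (H : Set G) := by
    simp only [H, coe_image, coe_range, Set.mem_image, Set.mem_Iio]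
    rintro g _ ⟨i, hi, rfl⟩
    obtain ⟨j, hj, hij⟩ := hnormal g i hi
    exact ⟨j, hj, hij.symm⟩
  set P := ∏ a ∈ H, β a (1 - oneS)
  have heH_eq : eH = 1 - P := by
    rw [heH, hψ, show P = ∏ i ∈ range m, β (h i) (1 - oneS) from
      prod_image fun i hi j hj => hinj i (mem_range.1 hi) j (mem_range.1 hj)]
    simp_rw [he, map_sub, map_one]
    exact sum_mul_prod_one_sub_mul_eq _ (fun i => IsIdempotentElem.map hidem _) m
  have heH_mem : eH ∈ fixedSubring β H := by
    rw [heH_eq]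
    refine sub_mem (one_mem _) (mem_fixedSubring.2 fun k hk => ?_)
    exact map_prod_map_of_image_mul_eq β (image_mul_left_eq_self hH_mul hk) _
  obtain ⟨t, ht, hsum⟩ := exists_sum_mul_eq_one_sub_prod (fixedSubring β H) (fun g => β g eH)
    fun g => map_mem_fixedSubring hH_normal g heH_mem
  have hsum_one : ∑ g, t g * β g eH = 1 := by
    have hglob' : ∏ g : G, β g (1 - oneS) = 0 := by simpa using hglob
    rw [hsum, heH_eq]
    simp_rw [map_sub, map_one, sub_sub_cancel]
    rw [prod_map_prod_map_eq_zero β ⟨h 0, mem_image_of_mem h (mem_range.2 hm)⟩ hglob', sub_zero]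
  refine ⟨⟨t, fun g => (hmem _).1 (ht g), hsum_one⟩, fun x hx => ?_⟩
  obtain ⟨c, hc, hxc⟩ := exists_eq_sum_map_mul_of_sum_mul_map_eq_one β hH_normal ht hsum_one
    ((hmem x).2 hx)
  exact ⟨c, fun g => (hmem _).1 (hc g), hxc⟩

/-- Proposition 3.2: there is a family (t_g) in T^{β_H} with Σ t_g·β_g(e_H) = 1_T;
consequently T^{β_H} = Σ_{g∈G} β_g(T^{β_H}·e_H) (globalization condition (G4)). -/
theorem stmt_4 {T : Type*} [CommRing T] {G : Type*} [Group G] [Fintype G]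
    (β : G →* RingAut T) (oneS : T) (hidem : oneS * oneS = oneS)
    (hglob : ∏ g : G, (1 - β g oneS) = 0)
    (m : ℕ) (hm : 0 < m) (h : ℕ → G) (h1 : h 0 = 1)
    (hinj : ∀ i < m, ∀ j < m, h i = h j → i = j)
    (hmulc : ∀ i < m, ∀ j < m, ∃ k < m, h i * h j = h k)
    (hnormal : ∀ g : G, ∀ i < m, ∃ j < m, g * h i * g⁻¹ = h j)
    (e : ℕ → T)
    (he : ∀ i, e i = (∏ j ∈ Finset.range i, (1 - β (h j) oneS)) * β (h i) oneS)
    (ψ : T → T) (hψ : ∀ t, ψ t = ∑ i ∈ Finset.range m, β (h i) t * e i)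
    (eH : T) (heH : eH = ψ oneS) :
    (∃ t : G → T, (∀ g : G, ∀ i < m, β (h i) (t g) = t g) ∧
      ∑ g : G, t g * β g eH = 1) ∧
    (∀ x : T, (∀ i < m, β (h i) x = x) →
      ∃ c : G → T, (∀ g : G, ∀ i < m, β (h i) (c g) = c g) ∧
        x = ∑ g : G, β g (c g * eH)) :=
  stmt_4_general β oneS hidem hglob m hm h hinj hmulc hnormal e he ψ hψ eH heH
end

section
/- The invariants of the ideal T^{β_H}·e_H under the restricted partial action γ of G/H coincide with T^{β_G}·e_H; explicitly, {x ∈ T : x = x·e_H, β_h(x) = x for all h ∈ H, and β_g(x)·β_g(e_H)·e_H = x·β_g(e_H)·e_H for all g ∈ G} = {t·e_H : t ∈ T with β_g(t) = t for all g ∈ G}. (Corollary 3.3(iii).) -/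
/-!
The element `E := e_H = ψ_H(1_S)` telescopes to `1 - ∏_{h ∈ H} (1 - β_h(1_S))`, the idempotent
join of the `H`-translates of `1_S`. It is `H`-invariant, and since it dominates `1_S` its `G`-translates still cover `T`:
`∏_g (1 - β_g E) = 0`. Such a cover yields a partition of unity `∑_g f_g = 1` with
`f_g β_g E = f_g`. The compatibility condition on `x` says exactly that the local pieces
`β_g x · β_g E` agree on overlaps, so they glue to `t = ∑_g β_g x · f_g`; then
`t β_g E = β_g x β_g E` for all `g`, which forces `t` to be `G`-invariant and gives `x = t E`.
-/

open Finset

section PartitionOfUnity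

variable {R : Type*} [CommRing R]

theorem Finset.sum_range_prod_one_sub_mul (x : ℕ → R) (n : ℕ) :
    ∑ i ∈ range n, (∏ j ∈ range i, (1 - x j)) * x i = 1 - ∏ j ∈ range n, (1 - x j) := by
  induction n with
  | zero => simp
  | succ n ih => rw [sum_range_succ, prod_range_succ, ih]; ring

theorem exists_sum_eq_one_mul_eq_self_of_prod_one_sub_eq_zero {ι : Type*} [Fintype ι]
    {E : ι → R} (hE : ∀ i, IsIdempotentElem (E i)) (hcover : ∏ i, (1 - E i) = 0) :
    ∃ f : ι → R, ∑ i, f i = 1 ∧ ∀ i, f i * E i = f i := by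
  classical
  let : LinearOrder ι := linearOrderOfSTO WellOrderingRel
  refine ⟨fun i => E i * ∏ j with j < i, (1 - E j), ?_, fun i => ?_⟩
  · linear_combination hcover.symm.trans (prod_one_sub_ordered univ E)
  · rw [mul_right_comm, (hE i).eq]

variable {ι : Type*} [Fintype ι] {E f : ι → R}

theorem sum_mul_mul_eq_of_compatible (hf : ∑ i, f i = 1) (hfE : ∀ i, f i * E i = f i)
    {x : ι → R} (hx : ∀ i j, x i * (E i * E j) = x j * (E i * E j)) (j : ι) :
    (∑ i, x i * f i) * E j = x j * E j :=
  calc (∑ i, x i * f i) * E j = ∑ i, f i * (x i * (E i * E j)) := by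
        rw [sum_mul]
        exact sum_congr rfl fun i _ => by linear_combination (-(x i * E j)) * hfE i
    _ = (∑ i, f i) * (x j * E j) := by
        rw [sum_mul]
        exact sum_congr rfl fun i _ => by linear_combination f i * hx i j + x j * E j * hfE i
    _ = x j * E j := by rw [hf, one_mul]

theorem eq_of_forall_mul_eq_of_sum_eq_one (hf : ∑ i, f i = 1) (hfE : ∀ i, f i * E i = f i)
    {s t : R} (h : ∀ i, s * E i = t * E i) : s = t :=
  calc s = ∑ i, s * E i * f i := by
        simp_rw [mul_assoc, mul_comm (E _), hfE, ← mul_sum, hf, mul_one]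
    _ = t := by
        simp_rw [h, mul_assoc, mul_comm (E _), hfE, ← mul_sum, hf, mul_one]

end PartitionOfUnity

section Descent

variable {T : Type*} [CommRing T] {G : Type*} [Group G] (β : G →* RingAut T)

theorem exists_invariant_eq_mul_of_compatible [Fintype G] {E x : T} (hE : IsIdempotentElem E)
    (hcover : ∏ g, (1 - β g E) = 0) (hxE : x * E = x)
    (hx : ∀ g, β g x * (β g E * E) = x * (β g E * E)) :
    ∃ t, (∀ g, β g t = t) ∧ x = t * E := by
  obtain ⟨f, hf, hfE⟩ :=
    exists_sum_eq_one_mul_eq_self_of_prod_one_sub_eq_zero (fun g => hE.map (β g)) hcover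
  have hcompat : ∀ a b, β a x * (β a E * β b E) = β b x * (β a E * β b E) := by
    intro a b
    have h := congrArg (β a) (hx (a⁻¹ * b))
    simp only [map_mul, RingAut.mul_apply, map_inv, RingAut.inv_apply,
      RingEquiv.apply_symm_apply] at h
    linear_combination -h
  set t := ∑ g, β g x * f g
  have hglue : ∀ a, t * β a E = β a x * β a E := sum_mul_mul_eq_of_compatible hf hfE hcompat
  refine ⟨t, fun k => eq_of_forall_mul_eq_of_sum_eq_one hf hfE fun a => ?_, ?_⟩
  · calc β k t * β a E = β k (t * β (k⁻¹ * a) E) := by simp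
      _ = β a x * β a E := by rw [hglue]; simp
      _ = t * β a E := (hglue a).symm
  · simpa [hxE] using (hglue 1).symm

end Descent

theorem Finset.prod_comp_mul_left_of_mul_mem {G M : Type*} [Group G] [DecidableEq G]
    [CommMonoid M] {s : Finset G} {g : G} (hs : ∀ a ∈ s, g * a ∈ s) (F : G → M) :
    ∏ a ∈ s, F (g * a) = ∏ a ∈ s, F a := by
  have himage : s.image (g * ·) = s :=
    eq_of_subset_of_card_le (image_subset_iff.2 hs)
      (card_image_of_injective _ (mul_right_injective g)).ge
  rw [← prod_image fun a _ b _ => mul_left_cancel, himage]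

section JoinTranslates

variable {T : Type*} [CommRing T] {G : Type*} [Group G] (β : G →* RingAut T)

/-- The join `⋁_{a ∈ s} β_a S` in the Boolean algebra of idempotents of `T`. -/
def joinTranslates (s : Finset G) (S : T) : T := 1 - ∏ a ∈ s, (1 - β a S)

theorem isIdempotentElem_joinTranslates {S : T} (hS : IsIdempotentElem S) (s : Finset G) :
    IsIdempotentElem (joinTranslates β s S) :=
  (prod_induction _ _ (fun _ _ => IsIdempotentElem.mul) IsIdempotentElem.one
    fun a _ => (hS.map (β a)).one_sub).one_sub

theorem map_joinTranslates_of_mul_mem [DecidableEq G] {s : Finset G} {g : G}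
    (hs : ∀ a ∈ s, g * a ∈ s) (S : T) : β g (joinTranslates β s S) = joinTranslates β s S := by
  simp only [joinTranslates, map_sub, map_one, map_prod, ← RingAut.mul_apply, ← map_mul]
  rw [prod_comp_mul_left_of_mul_mem hs fun a => 1 - β a S]

theorem prod_one_sub_map_joinTranslates_eq_zero [Fintype G] [DecidableEq G] {s : Finset G}
    (hs : 1 ∈ s) {S : T} (hcover : ∏ g, (1 - β g S) = 0) :
    ∏ g, (1 - β g (joinTranslates β s S)) = 0 := by
  have hfactor : ∀ g, 1 - β g (joinTranslates β s S) =
      (1 - β g S) * ∏ a ∈ s.erase 1, (1 - β (g * a) S) := by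
    intro g
    rw [joinTranslates, map_sub, map_one, sub_sub_cancel, map_prod,
      ← mul_prod_erase s _ hs]
    simp
  simp_rw [hfactor, prod_mul_distrib, hcover, zero_mul]

end JoinTranslates

theorem stmt_5_general {T : Type*} [CommRing T] {G : Type*} [Group G] [Fintype G]
    (β : G →* RingAut T) (oneS : T) (hidem : oneS * oneS = oneS)
    (hglob : ∏ g : G, (1 - β g oneS) = 0)
    (m : ℕ) (hm : 0 < m) (h : ℕ → G) (h1 : h 0 = 1)
    (hinj : ∀ i < m, ∀ j < m, h i = h j → i = j)
    (hmulc : ∀ i < m, ∀ j < m, ∃ k < m, h i * h j = h k)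
    (e : ℕ → T)
    (he : ∀ i, e i = (∏ j ∈ Finset.range i, (1 - β (h j) oneS)) * β (h i) oneS)
    (ψ : T → T) (hψ : ∀ t, ψ t = ∑ i ∈ Finset.range m, β (h i) t * e i)
    (eH : T) (heH : eH = ψ oneS) :
    {x : T | x * eH = x ∧ (∀ i < m, β (h i) x = x) ∧
        ∀ g : G, β g x * (β g eH * eH) = x * (β g eH * eH)} =
    {y : T | ∃ t : T, (∀ g : G, β g t = t) ∧ y = t * eH} := by
  classical
  have hS : IsIdempotentElem oneS := hidem
  set s := (range m).image h
  have heH_eq : eH = joinTranslates β s oneS := by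
    rw [heH, hψ, joinTranslates,
      prod_image fun i hi j hj => hinj i (mem_range.1 hi) j (mem_range.1 hj),
      ← sum_range_prod_one_sub_mul]
    refine sum_congr rfl fun i _ => ?_
    rw [he, mul_left_comm, (hS.map (β (h i))).eq]
  have hE : IsIdempotentElem eH := heH_eq ▸ isIdempotentElem_joinTranslates β hS s
  have hcover : ∏ g, (1 - β g eH) = 0 :=
    heH_eq ▸ prod_one_sub_map_joinTranslates_eq_zero β (mem_image.2 ⟨0, mem_range.2 hm, h1⟩) hglob
  have hHinv : ∀ i < m, β (h i) eH = eH := by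
    intro i hi
    refine heH_eq ▸ map_joinTranslates_of_mul_mem β ?_ oneS
    simp only [s, mem_image, mem_range, forall_exists_index, and_imp, forall_apply_eq_imp_iff₂]
    intro j hj
    obtain ⟨k, hk, hijk⟩ := hmulc i hi j hj
    exact ⟨k, hk, hijk.symm⟩
  ext x
  constructor
  · rintro ⟨hxE, -, hx⟩
    exact exists_invariant_eq_mul_of_compatible β hE hcover hxE hx
  · rintro ⟨t, ht, rfl⟩
    refine ⟨by rw [mul_assoc, hE.eq], fun i hi => by rw [map_mul, ht, hHinv i hi], fun g => ?_⟩
    rw [map_mul, ht]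
    linear_combination t * eH * (hE.map (β g)).eq - t * β g eH * hE.eq

/-- Corollary 3.3(iii): the invariants of the ideal T^{β_H}·e_H under the restricted
partial action of G/H coincide with T^{β_G}·e_H. -/
theorem stmt_5 {T : Type*} [CommRing T] {G : Type*} [Group G] [Fintype G]
    (β : G →* RingAut T) (oneS : T) (hidem : oneS * oneS = oneS)
    (hglob : ∏ g : G, (1 - β g oneS) = 0)
    (m : ℕ) (hm : 0 < m) (h : ℕ → G) (h1 : h 0 = 1)
    (hinj : ∀ i < m, ∀ j < m, h i = h j → i = j)
    (hmulc : ∀ i < m, ∀ j < m, ∃ k < m, h i * h j = h k)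
    (hnormal : ∀ g : G, ∀ i < m, ∃ j < m, g * h i * g⁻¹ = h j)
    (e : ℕ → T)
    (he : ∀ i, e i = (∏ j ∈ Finset.range i, (1 - β (h j) oneS)) * β (h i) oneS)
    (ψ : T → T) (hψ : ∀ t, ψ t = ∑ i ∈ Finset.range m, β (h i) t * e i)
    (eH : T) (heH : eH = ψ oneS) :
    {x : T | x * eH = x ∧ (∀ i < m, β (h i) x = x) ∧
        ∀ g : G, β g x * (β g eH * eH) = x * (β g eH * eH)} =
    {y : T | ∃ t : T, (∀ g : G, β g t = t) ∧ y = t * eH} :=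
  stmt_5_general β oneS hidem hglob m hm h h1 hinj hmulc e he ψ hψ eH heH
end

section
/- The ideal T^{β_H}·e_H is a partial Galois extension for the restricted partial action of G/H if and only if T^{β_H} is a (global) Galois extension of T^{β_G} for the induced action of G/H. Explicitly: there exist n and elements x_i, y_i ∈ T^{β_H}·e_H (1 ≤ i ≤ n) with Σ_{i=1}^n x_i·β_g(y_i)·β_g(e_H)·e_H = (e_H if g ∈ H, 0 otherwise) for all g ∈ G, if and only if there exist n and elements u_i, v_i ∈ T^{β_H} (1 ≤ i ≤ n) with Σ_{i=1}^n u_i·β_g(v_i) = (1_T if g ∈ H, 0 otherwise) for all g ∈ G. (Corollary 3.3(iv).) -/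
/-!
Let `E = 1 - ∏_{h ∈ H} (1 - β_h 1_S)`, the join of the `H`-translates of the idempotent `1_S`.
Orthogonalising the `β_h 1_S` along the enumeration of `H` shows `E = ψ_H(1_S) = e_H`. `E` is an
`H`-invariant idempotent with `E · 1_S = 1_S`, so `∏_g (1 - β_g 1_S) = 0` forces
`∏_g (1 - β_g E) = 0`.

Global coordinates `u, v` give partial ones `u · E, v · E`. Conversely, orthogonalising the
idempotents `β_g E` gives a partition of unity `1 = ∑_g f_g` with `f_g β_g E = f_g`, and the `f_g`
are `H`-invariant because each `β_g E` is (`H` is normal). Since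
`β_{g'} β_g = β_g β_{g⁻¹ g' g}` and `g⁻¹ g' g ∈ H ↔ g' ∈ H`, the elements `β_g(x_i) f_g` and
`β_g(y_i)` are global coordinates whenever `x, y` are partial ones.
-/

open Finset

theorem eq_ite_iff' {α : Sort*} {P : Prop} [Decidable P] {a b c : α} :
    a = (if P then b else c) ↔ (P → a = b) ∧ (¬P → a = c) := by
  rw [eq_comm, ite_eq_iff', eq_comm (a := b), eq_comm (a := c)]

theorem Finset.exists_range_reindex {ι α M : Type*} [Zero α] [AddCommMonoid M]
    (s : Finset ι) (a b : ι → α) :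
    ∃ n, ∃ x y : ℕ → α, (∀ i < n, ∃ k ∈ s, x i = a k ∧ y i = b k) ∧
      ∀ F : α → α → M, ∑ i ∈ range n, F (x i) (y i) = ∑ k ∈ s, F (a k) (b k) := by
  let τ : Fin s.card → ι := fun k => s.equivFin.symm k
  refine ⟨s.card, fun i => if hi : i < s.card then a (τ ⟨i, hi⟩) else 0,
    fun i => if hi : i < s.card then b (τ ⟨i, hi⟩) else 0, fun i hi => ?_, fun F => ?_⟩
  · exact ⟨τ ⟨i, hi⟩, (s.equivFin.symm _).2, dif_pos hi, dif_pos hi⟩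
  · rw [Finset.sum_range, ← s.sum_coe_sort, ← s.equivFin.symm.sum_comp]
    simp [τ]

theorem Finset.exists_sum_eq_one_of_prod_one_sub_eq_zero {ι R : Type*} [CommRing R]
    (s : Finset ι) {a : ι → R} (ha : ∀ i, IsIdempotentElem (a i))
    (hs : ∏ i ∈ s, (1 - a i) = 0) :
    ∃ f : ι → R, ∑ i ∈ s, f i = 1 ∧ (∀ i, f i * a i = f i) ∧
      ∀ σ : R →+* R, (∀ i, σ (a i) = a i) → ∀ i, σ (f i) = f i := by
  classical
  let _ : LinearOrder ι := linearOrderOfSTO WellOrderingRel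
  refine ⟨fun i => a i * ∏ j ∈ s with j < i, (1 - a j), ?_, fun i => ?_, fun σ hσ i => ?_⟩
  · rw [← sub_eq_zero, ← neg_sub, ← prod_one_sub_ordered, hs, neg_zero]
  · rw [mul_right_comm, (ha i).eq]
  · simp [map_prod, hσ]

theorem Finset.prod_one_sub_eq_zero_of_mul_eq {ι R : Type*} [CommRing R] (s : Finset ι)
    {a b : ι → R} (hab : ∀ i, a i * b i = b i) (hb : ∏ i ∈ s, (1 - b i) = 0) :
    ∏ i ∈ s, (1 - a i) = 0 := by
  have key : ∀ i, (1 - a i) * (1 - b i) = 1 - a i := fun i => by linear_combination hab i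
  rw [← prod_congr rfl fun i _ => key i, prod_mul_distrib, hb, mul_zero]

theorem Subgroup.exists_coe_eq_of_mul_mem {G : Type*} [Group G] [Finite G] (s : Set G)
    (one_mem : 1 ∈ s) (mul_mem : ∀ {a b}, a ∈ s → b ∈ s → a * b ∈ s) :
    ∃ H : Subgroup G, (H : Set G) = s := by
  let S : Submonoid G := ⟨⟨s, mul_mem⟩, one_mem⟩
  refine ⟨⟨S, fun {x} hx => ?_⟩, rfl⟩
  have hpow : x⁻¹ ∈ Submonoid.powers x :=
    (isOfFinOrder_of_finite x).mem_powers_iff_mem_zpowers.mpr (inv_mem (mem_zpowers x))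
  exact Submonoid.powers_le.mpr hx hpow

theorem Subgroup.Normal.conj_mem_iff {G : Type*} [Group G] {H : Subgroup G} (nH : H.Normal)
    {g t : G} : t⁻¹ * g * t ∈ H ↔ g ∈ H := by
  rw [mul_assoc, nH.mem_comm_iff, mul_inv_cancel_right]

theorem Subgroup.prod_range_eq_prod {G M : Type*} [Group G] [CommMonoid M] {H : Subgroup G}
    [Fintype H] {m : ℕ} {h : ℕ → G} (mem : ∀ g, g ∈ H ↔ ∃ j < m, g = h j)
    (hinj : ∀ i < m, ∀ j < m, h i = h j → i = j) (F : G → M) :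
    ∏ j ∈ range m, F (h j) = ∏ g : H, F g :=
  prod_bij (fun j hj => ⟨h j, (mem _).2 ⟨j, mem_range.1 hj, rfl⟩⟩) (fun _ _ => mem_univ _)
    (fun i hi j hj e => hinj i (mem_range.1 hi) j (mem_range.1 hj) (congrArg Subtype.val e))
    (fun g _ => by
      obtain ⟨j, hj, e⟩ := (mem g).1 g.2
      exact ⟨j, mem_range.2 hj, Subtype.ext e.symm⟩)
    fun _ _ => rfl

namespace PartialGalois

variable {T G : Type*} [CommRing T] [Group G] (β : G →* RingAut T) (H : Subgroup G)

theorem map_mul_apply (g k : G) (t : T) : β (g * k) t = β g (β k t) := by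
  rw [map_mul, RingAut.mul_apply]

theorem map_map_eq_map_conj (g t : G) (y : T) : β g (β t y) = β t (β (t⁻¹ * g * t) y) := by
  rw [← map_mul_apply, ← map_mul_apply]
  congr 2
  group

variable {β H}

theorem map_fixed_of_normal [H.Normal] {w : T} (hw : ∀ k ∈ H, β k w = w) (t : G) :
    ∀ k ∈ H, β k (β t w) = β t w := fun k hk => by
  rw [map_map_eq_map_conj, hw _ (Subgroup.Normal.conj_mem' ‹_› k hk t)]

variable (β H)

def orbitSup [Fintype H] (S : T) : T := 1 - ∏ g : H, (1 - β g S)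

variable {β H}

theorem isIdempotentElem_orbitSup [Fintype H] {S : T} (hS : IsIdempotentElem S) :
    IsIdempotentElem (orbitSup β H S) :=
  IsIdempotentElem.one_sub (prod_induction _ _ (fun _ _ => IsIdempotentElem.mul)
    IsIdempotentElem.one fun g _ => (hS.map (β g)).one_sub)

theorem orbitSup_mul_self [Fintype H] {S : T} (hS : IsIdempotentElem S) :
    orbitSup β H S * S = S := by
  classical
  rw [orbitSup, ← mul_prod_erase univ _ (mem_univ 1), Subgroup.coe_one, map_one,
    RingAut.one_apply]
  linear_combination (∏ g ∈ univ.erase (1 : H), (1 - β g S)) * hS.eq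

theorem map_orbitSup [Fintype H] {k : G} (hk : k ∈ H) (S : T) :
    β k (orbitSup β H S) = orbitSup β H S := by
  rw [orbitSup, map_sub, map_one, map_prod]
  congr 1
  exact Fintype.prod_equiv (Equiv.mulLeft ⟨k, hk⟩) _ _ fun g => by
    rw [map_sub, map_one, ← map_mul_apply]; rfl

theorem prod_one_sub_map_orbitSup_eq_zero [Fintype G] [Fintype H] {S : T}
    (hS : IsIdempotentElem S) (hcover : ∏ g : G, (1 - β g S) = 0) :
    ∏ g : G, (1 - β g (orbitSup β H S)) = 0 :=
  prod_one_sub_eq_zero_of_mul_eq univ (fun g => by rw [← map_mul, orbitSup_mul_self hS]) hcover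

theorem sum_range_map_mul_eq_orbitSup [Fintype H] {m : ℕ} {h : ℕ → G}
    (mem : ∀ g, g ∈ H ↔ ∃ j < m, g = h j) (hinj : ∀ i < m, ∀ j < m, h i = h j → i = j)
    {S : T} (hS : IsIdempotentElem S) :
    ∑ i ∈ range m, β (h i) S * ((∏ j ∈ range i, (1 - β (h j) S)) * β (h i) S) =
      orbitSup β H S := by
  rw [orbitSup, ← Subgroup.prod_range_eq_prod mem hinj fun g => 1 - β g S,
    prod_one_sub_ordered, sub_sub_cancel]
  refine sum_congr rfl fun i hi => ?_
  have hfilter : (range m).filter (· < i) = range i := by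
    ext j; simp only [mem_filter, mem_range] at hi ⊢; omega
  rw [hfilter]
  linear_combination (∏ j ∈ range i, (1 - β (h j) S)) * (hS.map (β (h i))).eq

variable (β H)

/-- Coordinates exhibiting `T^H · E` as a partial Galois extension for the induced partial action
of `G ⧸ H`. -/
def IsPartialGaloisCoordinates [DecidablePred (· ∈ H)] (E : T) (n : ℕ) (x y : ℕ → T) : Prop :=
  (∀ i < n, x i * E = x i ∧ y i * E = y i ∧
    (∀ k ∈ H, β k (x i) = x i) ∧ (∀ k ∈ H, β k (y i) = y i)) ∧
  ∀ g, ∑ i ∈ range n, x i * β g (y i) * (β g E * E) = if g ∈ H then E else 0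

def IsGaloisCoordinates [DecidablePred (· ∈ H)] (n : ℕ) (u v : ℕ → T) : Prop :=
  (∀ i < n, (∀ k ∈ H, β k (u i) = u i) ∧ (∀ k ∈ H, β k (v i) = v i)) ∧
  ∀ g, ∑ i ∈ range n, u i * β g (v i) = if g ∈ H then 1 else 0

variable {β H} [DecidablePred (· ∈ H)]

theorem IsGaloisCoordinates.isPartialGaloisCoordinates_mul {E : T} (hE : IsIdempotentElem E)
    (hEH : ∀ k ∈ H, β k E = E) {n : ℕ} {u v : ℕ → T} (h : IsGaloisCoordinates β H n u v) :
    IsPartialGaloisCoordinates β H E n (fun i => u i * E) (fun i => v i * E) := by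
  refine ⟨fun i hi => ⟨by rw [mul_assoc, hE.eq], by rw [mul_assoc, hE.eq], fun k hk => ?_,
    fun k hk => ?_⟩, fun g => ?_⟩
  · rw [map_mul, (h.1 i hi).1 k hk, hEH k hk]
  · rw [map_mul, (h.1 i hi).2 k hk, hEH k hk]
  · have hterm : ∀ i, u i * E * β g (v i * E) * (β g E * E) = u i * β g (v i) * (E * β g E) :=
      fun i => calc
        _ = u i * β g (v i) * ((E * E) * (β g E * β g E)) := by rw [map_mul]; ring
        _ = _ := by rw [hE.eq, (hE.map (β g)).eq]
    simp only [hterm, ← sum_mul, h.2 g]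
    split_ifs with hg
    · rw [hEH g hg, hE.eq, one_mul]
    · rw [zero_mul]

theorem IsPartialGaloisCoordinates.sum_mul_map_eq {E : T} {n : ℕ} {x y : ℕ → T}
    (h : IsPartialGaloisCoordinates β H E n x y) (g : G) :
    ∑ i ∈ range n, x i * β g (y i) = if g ∈ H then E else 0 := by
  rw [← h.2 g]
  refine sum_congr rfl fun i hi => ?_
  obtain ⟨hx, hy, -⟩ := h.1 i (mem_range.mp hi)
  calc x i * β g (y i) = x i * E * β g (y i * E) := by rw [hx, hy]
    _ = _ := by rw [map_mul]; ring

theorem IsPartialGaloisCoordinates.exists_isGaloisCoordinates [Fintype G] [H.Normal] {E : T}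
    (hE : IsIdempotentElem E) (hEH : ∀ k ∈ H, β k E = E) (hcover : ∏ g : G, (1 - β g E) = 0)
    {n : ℕ} {x y : ℕ → T} (h : IsPartialGaloisCoordinates β H E n x y) :
    ∃ N u v, IsGaloisCoordinates β H N u v := by
  obtain ⟨f, hf_sum, hf_mul, hf_fixed⟩ :=
    exists_sum_eq_one_of_prod_one_sub_eq_zero univ (fun t => hE.map (β t)) hcover
  have hfH : ∀ t, ∀ k ∈ H, β k (f t) = f t := fun t k hk =>
    hf_fixed (β k) (fun s => map_fixed_of_normal hEH s k hk) t
  obtain ⟨N, u, v, huv, hsum⟩ := (univ ×ˢ range n).exists_range_reindex (M := T)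
    (fun p : G × ℕ => β p.1 (x p.2) * f p.1) (fun p => β p.1 (y p.2))
  refine ⟨N, u, v, fun i hi => ?_, fun g => ?_⟩
  · obtain ⟨⟨t, j⟩, hp, hu, hv⟩ := huv i hi
    obtain ⟨-, -, hx, hy⟩ := h.1 j (mem_range.mp (mem_product.mp hp).2)
    refine ⟨fun k hk => ?_, fun k hk => ?_⟩
    · rw [hu, map_mul, map_fixed_of_normal hx t k hk, hfH t k hk]
    · rw [hv, map_fixed_of_normal hy t k hk]
  · rw [hsum fun a b => a * β g b, sum_product]
    calc ∑ t, ∑ j ∈ range n, β t (x j) * f t * β g (β t (y j))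
        = ∑ t, f t * β t (∑ j ∈ range n, x j * β (t⁻¹ * g * t) (y j)) := by
          simp only [map_map_eq_map_conj β g, map_sum, map_mul, mul_sum]
          exact sum_congr rfl fun t _ => sum_congr rfl fun j _ => by ring
      _ = ∑ t, f t * β t (if g ∈ H then E else 0) := by
          simp only [h.sum_mul_map_eq, Subgroup.Normal.conj_mem_iff ‹_›]
      _ = if g ∈ H then 1 else 0 := by
          split_ifs
          · simp only [hf_mul, hf_sum]
          · simp only [map_zero, mul_zero, sum_const_zero]

theorem exists_isPartialGaloisCoordinates_iff [Fintype G] [H.Normal] {E : T}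
    (hE : IsIdempotentElem E) (hEH : ∀ k ∈ H, β k E = E) (hcover : ∏ g : G, (1 - β g E) = 0) :
    (∃ n x y, IsPartialGaloisCoordinates β H E n x y) ↔ ∃ n u v, IsGaloisCoordinates β H n u v :=
  ⟨fun ⟨_, _, _, h⟩ => h.exists_isGaloisCoordinates hE hEH hcover,
    fun ⟨n, _, _, h⟩ => ⟨n, _, _, h.isPartialGaloisCoordinates_mul hE hEH⟩⟩

end PartialGalois

open PartialGalois

/-- Corollary 3.3(iv): T^{β_H}·e_H is a partial Galois extension for the restricted
partial action of G/H iff T^{β_H} is a global Galois extension of T^{β_G} for the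
induced G/H-action. -/
theorem stmt_6 {T : Type*} [CommRing T] {G : Type*} [Group G] [Fintype G]
    (β : G →* RingAut T) (oneS : T) (hidem : oneS * oneS = oneS)
    (hglob : ∏ g : G, (1 - β g oneS) = 0)
    (m : ℕ) (hm : 0 < m) (h : ℕ → G) (h1 : h 0 = 1)
    (hinj : ∀ i < m, ∀ j < m, h i = h j → i = j)
    (hmulc : ∀ i < m, ∀ j < m, ∃ k < m, h i * h j = h k)
    (hnormal : ∀ g : G, ∀ i < m, ∃ j < m, g * h i * g⁻¹ = h j)
    (e : ℕ → T)
    (he : ∀ i, e i = (∏ j ∈ Finset.range i, (1 - β (h j) oneS)) * β (h i) oneS)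
    (ψ : T → T) (hψ : ∀ t, ψ t = ∑ i ∈ Finset.range m, β (h i) t * e i)
    (eH : T) (heH : eH = ψ oneS) :
    (∃ n : ℕ, ∃ x y : ℕ → T,
      (∀ i < n, x i * eH = x i ∧ y i * eH = y i ∧
        (∀ j < m, β (h j) (x i) = x i) ∧ (∀ j < m, β (h j) (y i) = y i)) ∧
      (∀ g : G,
        ((∃ j < m, g = h j) →
          ∑ i ∈ Finset.range n, x i * β g (y i) * (β g eH * eH) = eH) ∧
        ((¬ ∃ j < m, g = h j) →
          ∑ i ∈ Finset.range n, x i * β g (y i) * (β g eH * eH) = 0)))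
    ↔
    (∃ n : ℕ, ∃ u v : ℕ → T,
      (∀ i < n, (∀ j < m, β (h j) (u i) = u i) ∧ (∀ j < m, β (h j) (v i) = v i)) ∧
      (∀ g : G,
        ((∃ j < m, g = h j) → ∑ i ∈ Finset.range n, u i * β g (v i) = 1) ∧
        ((¬ ∃ j < m, g = h j) → ∑ i ∈ Finset.range n, u i * β g (v i) = 0))) := by
  classical
  obtain ⟨H, hH⟩ := Subgroup.exists_coe_eq_of_mul_mem {g | ∃ j < m, g = h j} ⟨0, hm, h1.symm⟩
    (by rintro _ _ ⟨i, hi, rfl⟩ ⟨j, hj, rfl⟩; exact hmulc i hi j hj)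
  have mem : ∀ g, g ∈ H ↔ ∃ j < m, g = h j := fun g => by rw [← SetLike.mem_coe, hH]; rfl
  have : H.Normal := ⟨fun k hk g => by
    obtain ⟨i, hi, rfl⟩ := (mem k).1 hk
    exact (mem _).2 (hnormal g i hi)⟩
  have fixed_iff : ∀ t, (∀ j < m, β (h j) t = t) ↔ ∀ k ∈ H, β k t = t := fun t =>
    ⟨fun ht k hk => by obtain ⟨j, hj, rfl⟩ := (mem k).1 hk; exact ht j hj,
      fun ht j hj => ht _ ((mem _).2 ⟨j, hj, rfl⟩)⟩
  have heH' : eH = orbitSup β H oneS := by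
    rw [heH, hψ, ← sum_range_map_mul_eq_orbitSup mem hinj hidem]
    simp only [he]
  subst heH'
  have key := exists_isPartialGaloisCoordinates_iff (E := orbitSup β H oneS)
    (isIdempotentElem_orbitSup hidem)
    (fun k hk => map_orbitSup hk oneS) (prod_one_sub_map_orbitSup_eq_zero hidem hglob)
  simp only [IsPartialGaloisCoordinates, IsGaloisCoordinates, eq_ite_iff', ← fixed_iff] at key
  simpa only [mem] using key
end

section
/- The data (D̃_{gH}, α̃_{gH}) is a well-defined unital partial action of the quotient group G/H on the ring S^{α_H}. Precisely: (a) if g⁻¹g' ∈ H then β_g(e_H) = β_{g'}(e_H) and β_g(ψ_H(x)) = β_{g'}(ψ_H(x)) for every x ∈ S^{α_H}, so 1̃_{gH}, D̃_{gH} and α̃_{gH} depend only on the coset gH; (b) each 1̃_{gH} is an idempotent lying in S^{α_H}, and 1̃_H = 1_S so D̃_H = S^{α_H}; (c) α̃_{gH} maps D̃_{g⁻¹H} bijectively onto D̃_{gH}, is additive and multiplicative, and α̃_H is the identity on S^{α_H}; (d) α̃_{gH}(1̃_{g⁻¹H}·1̃_{lH}) = 1̃_{gH}·1̃_{glH} for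 all g, l ∈ G; (e) α̃_{gH}(α̃_{lH}(x·1̃_{l⁻¹H})·1̃_{g⁻¹H}) = α̃_{glH}(x·1̃_{(gl)⁻¹H})·1̃_{gH} for all x ∈ S^{α_H} and g, l ∈ G. (Theorem 3.5(i).) -/
/-!
Notation: `glue β oneS m h` is ψ_H, so e_H = `glue β oneS m h oneS`; `partialFixedPoints` is S^{α_H},
`quotientAction g` is α̃_{gH}, `quotientDomain g` is D̃_{gH}, and 1̃_{gH} = α̃_{gH}(1_S).

The e_i are orthogonal idempotents with e_i ≤ β_{h_i}(1_S) and Σ e_i = 1 - ∏ (1 - β_{h_i}(1_S)),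
the join of the β_h(1_S), h ∈ H. Hence ψ_H is multiplicative, and an element below e_H is
determined by its products with the β_h(1_S). For s ∈ S^{α_H} the translates β_h(s) agree on
overlaps, so ψ_H(s)·β_h(1_S) = β_h(s)·β_h(1_S) for h ∈ H; since β_k(ψ_H(s)) has the same
restrictions for k ∈ H (and lies below e_H, by the case s = 1_S), β_k(ψ_H(s)) = ψ_H(s), which is (a).
Normality of H then gives ψ_H(α̃_g(s)) = β_g(ψ_H(s))·e_H, i.e. α̃_g ∘ α̃_l = α̃_{gl}·1̃_g on S^{α_H},
and (b)–(e) follow from this composition law by idempotent arithmetic.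
-/

open Finset

theorem Subgroup.exists_forall_mem_iff_of_mul_mem {G : Type*} [Group G] [Finite G] {S : Set G}
    (h1 : 1 ∈ S) (hmul : ∀ a ∈ S, ∀ b ∈ S, a * b ∈ S) : ∃ H : Subgroup G, ∀ x, x ∈ H ↔ x ∈ S :=
  ⟨subgroupOfIdempotent S ⟨1, h1⟩ (Set.Subset.antisymm
      (Set.mul_subset_iff.2 hmul) fun x hx => ⟨1, h1, x, hx, one_mul x⟩), fun _ => Iff.rfl⟩

section DisjointIdem

variable {R : Type*} [CommRing R]

def disjointIdem (f : ℕ → R) (i : ℕ) : R := (∏ j ∈ range i, (1 - f j)) * f i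

theorem OrthogonalIdempotents.sum_mul_sum_mul {I : Type*} {e : I → R}
    (he : OrthogonalIdempotents e) (s : Finset I) (a b : I → R) :
    (∑ i ∈ s, a i * e i) * (∑ i ∈ s, b i * e i) = ∑ i ∈ s, a i * b i * e i := by
  classical
  rw [sum_mul_sum]
  refine sum_congr rfl fun i hi => ?_
  rw [sum_eq_single i (fun j _ hji => by rw [mul_mul_mul_comm, he.ortho hji.symm, mul_zero])
    (fun hi' => absurd hi hi'), mul_mul_mul_comm, (he.idem i).eq]

variable {f : ℕ → R}

theorem disjointIdem_zero : disjointIdem f 0 = f 0 := by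
  simp [disjointIdem]

theorem disjointIdem_mul_self (hf : ∀ i, IsIdempotentElem (f i)) (i : ℕ) :
    disjointIdem f i * f i = disjointIdem f i := by
  rw [disjointIdem, mul_assoc, (hf i).eq]

theorem mul_prod_one_sub_of_mem (hf : ∀ i, IsIdempotentElem (f i)) {s : Finset ℕ} {j : ℕ}
    (hj : j ∈ s) : f j * ∏ k ∈ s, (1 - f k) = 0 := by
  rw [← mul_prod_erase s _ hj, ← mul_assoc, mul_sub, mul_one, (hf j).eq, sub_self, zero_mul]

theorem disjointIdem_mul_of_lt (hf : ∀ i, IsIdempotentElem (f i)) {i j : ℕ} (hji : j < i) :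
    disjointIdem f i * f j = 0 := by
  rw [disjointIdem, mul_right_comm, mul_comm (∏ _ ∈ _, _),
    mul_prod_one_sub_of_mem hf (mem_range.2 hji), zero_mul]

theorem orthogonalIdempotents_disjointIdem (hf : ∀ i, IsIdempotentElem (f i)) :
    OrthogonalIdempotents (disjointIdem f) where
  idem i := by
    have hprod : IsIdempotentElem (∏ j ∈ range i, (1 - f j)) := by
      rw [IsIdempotentElem, ← prod_mul_distrib]
      exact prod_congr rfl fun j _ => (hf j).one_sub.eq
    exact hprod.mul (hf i)
  ortho := by
    suffices h : ∀ i j, i < j → disjointIdem f i * disjointIdem f j = 0 by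
      intro i j hij
      rcases hij.lt_or_gt with hlt | hgt
      · exact h i j hlt
      · rw [mul_comm]; exact h j i hgt
    intro i j hij
    rw [← disjointIdem_mul_self hf i, mul_right_comm, mul_assoc, disjointIdem_mul_of_lt hf hij,
      mul_zero]

theorem sum_disjointIdem (m : ℕ) :
    ∑ i ∈ range m, disjointIdem f i = 1 - ∏ i ∈ range m, (1 - f i) := by
  have htel : ∀ i, disjointIdem f i =
      (∏ j ∈ range i, (1 - f j)) - ∏ j ∈ range (i + 1), (1 - f j) := fun i => by
    rw [prod_range_succ, disjointIdem]; ring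
  simp only [htel, sum_range_sub', range_zero, prod_empty]

end DisjointIdem

section Glue

variable {T : Type*} [CommRing T] {G : Type*} [Group G]

def glue (β : G →* RingAut T) (oneS : T) (m : ℕ) (h : ℕ → G) (t : T) : T :=
  ∑ i ∈ range m, β (h i) t * disjointIdem (fun i => β (h i) oneS) i

def partialFixedPoints (β : G →* RingAut T) (oneS : T) (H : Subgroup G) : Set T :=
  {s | s * oneS = s ∧ ∀ x ∈ H, β x s * oneS = s * (β x oneS * oneS)}

def quotientAction (β : G →* RingAut T) (oneS : T) (m : ℕ) (h : ℕ → G) (g : G) (x : T) : T :=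
  β g (glue β oneS m h x) * oneS

def quotientDomain (β : G →* RingAut T) (oneS : T) (m : ℕ) (h : ℕ → G) (H : Subgroup G)
    (g : G) : Set T :=
  {x | ∃ s, s ∈ partialFixedPoints β oneS H ∧ x = s * quotientAction β oneS m h g oneS}

variable {β : G →* RingAut T} {oneS : T} {m : ℕ} {h : ℕ → G} {H : Subgroup G}

theorem β_mul_apply (x y : G) (t : T) : β (x * y) t = β x (β y t) := by
  rw [map_mul]; rfl

theorem β_apply_β_inv_apply (x : G) (t : T) : β x (β x⁻¹ t) = t := by
  rw [← β_mul_apply, mul_inv_cancel, map_one, RingAut.one_apply]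

theorem oneS_mem_partialFixedPoints (hidem : IsIdempotentElem oneS) (H : Subgroup G) :
    oneS ∈ partialFixedPoints β oneS H :=
  ⟨hidem.eq, fun x _ => by rw [mul_left_comm, hidem.eq]⟩

theorem β_mul_β_oneS_of_mem {s : T} (hs : s ∈ partialFixedPoints β oneS H)
    {x y : G} (hx : x ∈ H) (hy : y ∈ H) :
    β x s * β y oneS = β y s * (β x oneS * β y oneS) := by
  have := congrArg (β y) (hs.2 (y⁻¹ * x) (H.mul_mem (H.inv_mem hy) hx))
  simpa only [map_mul (β y), ← β_mul_apply, mul_inv_cancel_left] using this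

theorem glue_add (s t : T) : glue β oneS m h (s + t) = glue β oneS m h s + glue β oneS m h t := by
  simp only [glue, map_add, add_mul, sum_add_distrib]

theorem orthogonalIdempotents_disjointIdem_β (hidem : IsIdempotentElem oneS) :
    OrthogonalIdempotents (disjointIdem fun i => β (h i) oneS) :=
  orthogonalIdempotents_disjointIdem fun i => hidem.map (β (h i))

theorem glue_mul (hidem : IsIdempotentElem oneS) (s t : T) :
    glue β oneS m h (s * t) = glue β oneS m h s * glue β oneS m h t := by
  simp only [glue, (orthogonalIdempotents_disjointIdem_β hidem).sum_mul_sum_mul, map_mul]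

theorem glue_mul_oneS_eq_glue (hidem : IsIdempotentElem oneS) (t : T) :
    glue β oneS m h (t * oneS) = glue β oneS m h t := by
  refine sum_congr rfl fun i _ => ?_
  rw [map_mul, mul_assoc, mul_comm (β (h i) oneS),
    disjointIdem_mul_self fun i => hidem.map (β (h i))]

theorem glue_oneS_eq_sum (hidem : IsIdempotentElem oneS) :
    glue β oneS m h oneS = ∑ i ∈ range m, disjointIdem (fun i => β (h i) oneS) i := by
  have h1 := glue_mul_oneS_eq_glue (β := β) (m := m) (h := h) hidem 1
  rw [one_mul] at h1
  rw [h1, glue]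
  simp only [map_one, one_mul]

theorem glue_mul_glue_oneS (hidem : IsIdempotentElem oneS) (t : T) :
    glue β oneS m h t * glue β oneS m h oneS = glue β oneS m h t := by
  rw [← glue_mul hidem, glue_mul_oneS_eq_glue hidem]

/-- `e_0 = 1_S` and `e_i ≤ 1 - 1_S` for `i > 0`, so only the term `i = 0` survives. -/
theorem glue_mul_oneS (hidem : IsIdempotentElem oneS) (h0 : h 0 = 1) (hm : 0 < m) (t : T) :
    glue β oneS m h t * oneS = t * oneS := by
  have hp : ∀ i, IsIdempotentElem (β (h i) oneS) := fun i => hidem.map (β (h i))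
  rw [glue, sum_mul, sum_eq_single_of_mem 0 (mem_range.2 hm), mul_assoc, disjointIdem_zero, h0,
    map_one, RingAut.one_apply, RingAut.one_apply, hidem.eq]
  intro i _ hi
  have := disjointIdem_mul_of_lt hp (Nat.pos_of_ne_zero hi)
  rw [h0, map_one, RingAut.one_apply] at this
  rw [mul_assoc, this, mul_zero]

theorem quotientAction_one (hidem : IsIdempotentElem oneS) (h0 : h 0 = 1) (hm : 0 < m)
    {s : T} (hs : s ∈ partialFixedPoints β oneS H) : quotientAction β oneS m h 1 s = s := by
  rw [quotientAction, map_one, RingAut.one_apply, glue_mul_oneS hidem h0 hm, hs.1]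

theorem quotientAction_add (g : G) (x y : T) :
    quotientAction β oneS m h g (x + y) =
      quotientAction β oneS m h g x + quotientAction β oneS m h g y := by
  rw [quotientAction, glue_add, map_add, add_mul]; rfl

theorem quotientAction_mul (hidem : IsIdempotentElem oneS) (g : G) (x y : T) :
    quotientAction β oneS m h g (x * y) =
      quotientAction β oneS m h g x * quotientAction β oneS m h g y := by
  simp only [quotientAction, glue_mul hidem, map_mul]
  linear_combination (-(β g (glue β oneS m h x) * β g (glue β oneS m h y))) * hidem.eq

theorem quotientAction_oneS_mul_self (hidem : IsIdempotentElem oneS) (g : G) :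
    quotientAction β oneS m h g oneS * quotientAction β oneS m h g oneS =
      quotientAction β oneS m h g oneS := by
  rw [← quotientAction_mul hidem, hidem.eq]

theorem quotientAction_mul_oneS (hidem : IsIdempotentElem oneS) (g : G) (x : T) :
    quotientAction β oneS m h g x * oneS = quotientAction β oneS m h g x := by
  rw [quotientAction, mul_assoc, hidem.eq]

theorem mem_partialFixedPoints_iff (hH : ∀ x, x ∈ H ↔ ∃ i < m, h i = x) (s : T) :
    s ∈ partialFixedPoints β oneS H ↔
      s * oneS = s ∧ ∀ i < m, β (h i) s * oneS = s * (β (h i) oneS * oneS) := by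
  refine and_congr_right fun _ => ⟨fun hs i hi => hs _ ((hH _).2 ⟨i, hi, rfl⟩), fun hs x hx => ?_⟩
  obtain ⟨i, hi, rfl⟩ := (hH x).1 hx
  exact hs i hi

theorem quotientDomain_one (hidem : IsIdempotentElem oneS) (h0 : h 0 = 1) (hm : 0 < m) :
    quotientDomain β oneS m h H 1 = partialFixedPoints β oneS H := by
  ext x
  simp only [quotientDomain, quotientAction_one hidem h0 hm (oneS_mem_partialFixedPoints hidem H)]
  constructor
  · rintro ⟨s, hs, rfl⟩
    rwa [hs.1]
  · exact fun hx => ⟨x, hx, hx.1.symm⟩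

theorem β_oneS_mul_glue_oneS (hidem : IsIdempotentElem oneS)
    (hH : ∀ x, x ∈ H ↔ ∃ i < m, h i = x) {x : G} (hx : x ∈ H) :
    β x oneS * glue β oneS m h oneS = β x oneS := by
  obtain ⟨i, hi, rfl⟩ := (hH x).1 hx
  rw [glue_oneS_eq_sum hidem, sum_disjointIdem, mul_sub, mul_one,
    mul_prod_one_sub_of_mem (fun i => hidem.map (β (h i))) (mem_range.2 hi), sub_zero]

theorem mul_glue_oneS_eq_of_forall (hidem : IsIdempotentElem oneS)
    (hH : ∀ x, x ∈ H ↔ ∃ i < m, h i = x) {z z' : T}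
    (hzz : ∀ x ∈ H, z * β x oneS = z' * β x oneS) :
    z * glue β oneS m h oneS = z' * glue β oneS m h oneS := by
  rw [glue_oneS_eq_sum hidem, mul_sum, mul_sum]
  refine sum_congr rfl fun i hi => ?_
  rw [← disjointIdem_mul_self (fun i => hidem.map (β (h i))) i, mul_left_comm z,
    mul_left_comm z', hzz (h i) ((hH _).2 ⟨i, mem_range.1 hi, rfl⟩)]

theorem glue_mul_β_oneS (hidem : IsIdempotentElem oneS) (hH : ∀ x, x ∈ H ↔ ∃ i < m, h i = x)
    {s : T} (hs : s ∈ partialFixedPoints β oneS H) {x : G} (hx : x ∈ H) :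
    glue β oneS m h s * β x oneS = β x s * β x oneS :=
  calc glue β oneS m h s * β x oneS
      = ∑ i ∈ range m, β x s * β x oneS *
          (β (h i) oneS * disjointIdem (fun i => β (h i) oneS) i) := by
        rw [glue, sum_mul]
        refine sum_congr rfl fun i hi => ?_
        linear_combination disjointIdem (fun i => β (h i) oneS) i *
          β_mul_β_oneS_of_mem hs ((hH _).2 ⟨i, mem_range.1 hi, rfl⟩) hx
    _ = β x s * β x oneS * glue β oneS m h oneS := by rw [← mul_sum]; rfl
    _ = β x s * β x oneS := by rw [mul_assoc, β_oneS_mul_glue_oneS hidem hH hx]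

theorem β_glue_mul_glue_oneS (hidem : IsIdempotentElem oneS)
    (hH : ∀ x, x ∈ H ↔ ∃ i < m, h i = x) {s : T} (hs : s ∈ partialFixedPoints β oneS H)
    {k : G} (hk : k ∈ H) :
    β k (glue β oneS m h s) * glue β oneS m h oneS = glue β oneS m h s := by
  rw [mul_glue_oneS_eq_of_forall hidem hH (z' := glue β oneS m h s), glue_mul_glue_oneS hidem]
  intro x hx
  have hkx : k⁻¹ * x ∈ H := H.mul_mem (H.inv_mem hk) hx
  calc β k (glue β oneS m h s) * β x oneS
      = β k (glue β oneS m h s * β (k⁻¹ * x) oneS) := by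
        rw [map_mul, β_mul_apply, β_apply_β_inv_apply]
    _ = β k (β (k⁻¹ * x) s * β (k⁻¹ * x) oneS) := by rw [glue_mul_β_oneS hidem hH hs hkx]
    _ = β x s * β x oneS := by
        rw [map_mul, β_mul_apply, β_mul_apply, β_apply_β_inv_apply, β_apply_β_inv_apply]
    _ = glue β oneS m h s * β x oneS := (glue_mul_β_oneS hidem hH hs hx).symm

theorem β_glue_oneS (hidem : IsIdempotentElem oneS) (hH : ∀ x, x ∈ H ↔ ∃ i < m, h i = x)
    {k : G} (hk : k ∈ H) : β k (glue β oneS m h oneS) = glue β oneS m h oneS := by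
  have honeS := oneS_mem_partialFixedPoints (β := β) hidem H
  have hbelow : glue β oneS m h oneS * β k (glue β oneS m h oneS) = β k (glue β oneS m h oneS) := by
    simpa only [map_mul, β_apply_β_inv_apply] using
      congrArg (β k) (β_glue_mul_glue_oneS hidem hH honeS (H.inv_mem hk))
  rw [← hbelow, mul_comm, β_glue_mul_glue_oneS hidem hH honeS hk]

theorem β_glue (hidem : IsIdempotentElem oneS) (hH : ∀ x, x ∈ H ↔ ∃ i < m, h i = x)
    {s : T} (hs : s ∈ partialFixedPoints β oneS H) {k : G} (hk : k ∈ H) :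
    β k (glue β oneS m h s) = glue β oneS m h s :=
  calc β k (glue β oneS m h s) = β k (glue β oneS m h s * glue β oneS m h oneS) := by
        rw [glue_mul_glue_oneS hidem]
    _ = glue β oneS m h s := by
        rw [map_mul, β_glue_oneS hidem hH hk, β_glue_mul_glue_oneS hidem hH hs hk]

theorem glue_mul_oneS_of_forall_β_eq (hidem : IsIdempotentElem oneS)
    (hH : ∀ x, x ∈ H ↔ ∃ i < m, h i = x) {y : T} (hy : ∀ x ∈ H, β x y = y) :
    glue β oneS m h (y * oneS) = y * glue β oneS m h oneS := by
  rw [glue_mul_oneS_eq_glue hidem, glue_oneS_eq_sum hidem, mul_sum]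
  exact sum_congr rfl fun i hi => by rw [hy _ ((hH _).2 ⟨i, mem_range.1 hi, rfl⟩)]

theorem mul_oneS_mem_partialFixedPoints (hidem : IsIdempotentElem oneS) {y : T}
    (hy : ∀ x ∈ H, β x y = y) : y * oneS ∈ partialFixedPoints β oneS H := by
  refine ⟨by rw [mul_assoc, hidem.eq], fun x hx => ?_⟩
  rw [map_mul, hy x hx]
  linear_combination (-(y * β x oneS)) * hidem.eq

section Normal

variable [H.Normal]

theorem β_β_glue_of_mem (hidem : IsIdempotentElem oneS)
    (hH : ∀ x, x ∈ H ↔ ∃ i < m, h i = x) {s : T} (hs : s ∈ partialFixedPoints β oneS H)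
    (g : G) {x : G} (hx : x ∈ H) :
    β x (β g (glue β oneS m h s)) = β g (glue β oneS m h s) := by
  rw [← β_mul_apply, show x * g = g * (g⁻¹ * x * g) by group, β_mul_apply,
    β_glue hidem hH hs (‹H.Normal›.conj_mem' x hx g)]

theorem quotientAction_mem (hidem : IsIdempotentElem oneS)
    (hH : ∀ x, x ∈ H ↔ ∃ i < m, h i = x) {s : T} (hs : s ∈ partialFixedPoints β oneS H)
    (g : G) : quotientAction β oneS m h g s ∈ partialFixedPoints β oneS H :=
  mul_oneS_mem_partialFixedPoints hidem fun _ hx => β_β_glue_of_mem hidem hH hs g hx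

theorem glue_quotientAction (hidem : IsIdempotentElem oneS)
    (hH : ∀ x, x ∈ H ↔ ∃ i < m, h i = x) {s : T} (hs : s ∈ partialFixedPoints β oneS H)
    (g : G) :
    glue β oneS m h (quotientAction β oneS m h g s) =
      β g (glue β oneS m h s) * glue β oneS m h oneS :=
  glue_mul_oneS_of_forall_β_eq hidem hH fun _ hx => β_β_glue_of_mem hidem hH hs g hx

theorem quotientAction_quotientAction (hidem : IsIdempotentElem oneS)
    (hH : ∀ x, x ∈ H ↔ ∃ i < m, h i = x) {s : T} (hs : s ∈ partialFixedPoints β oneS H)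
    (g l : G) :
    quotientAction β oneS m h g (quotientAction β oneS m h l s) =
      quotientAction β oneS m h (g * l) s * quotientAction β oneS m h g oneS := by
  rw [quotientAction, glue_quotientAction hidem hH hs, map_mul, ← β_mul_apply, quotientAction,
    quotientAction]
  linear_combination (-(β (g * l) (glue β oneS m h s) * β g (glue β oneS m h oneS))) * hidem.eq

theorem quotientAction_quotientAction_inv_oneS (hidem : IsIdempotentElem oneS) (h0 : h 0 = 1)
    (hm : 0 < m) (hH : ∀ x, x ∈ H ↔ ∃ i < m, h i = x) (g : G) :
    quotientAction β oneS m h g (quotientAction β oneS m h g⁻¹ oneS) =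
      quotientAction β oneS m h g oneS := by
  have honeS := oneS_mem_partialFixedPoints (β := β) hidem H
  rw [quotientAction_quotientAction hidem hH honeS, mul_inv_cancel,
    quotientAction_one hidem h0 hm honeS, mul_comm, quotientAction_mul_oneS hidem]

theorem quotientAction_mul_inv_oneS (hidem : IsIdempotentElem oneS) (h0 : h 0 = 1) (hm : 0 < m)
    (hH : ∀ x, x ∈ H ↔ ∃ i < m, h i = x) (g : G) (x : T) :
    quotientAction β oneS m h g (x * quotientAction β oneS m h g⁻¹ oneS) =
      quotientAction β oneS m h g x * quotientAction β oneS m h g oneS := by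
  rw [quotientAction_mul hidem, quotientAction_quotientAction_inv_oneS hidem h0 hm hH]

theorem mapsTo_quotientAction (hidem : IsIdempotentElem oneS) (h0 : h 0 = 1) (hm : 0 < m)
    (hH : ∀ x, x ∈ H ↔ ∃ i < m, h i = x) (g : G) :
    Set.MapsTo (quotientAction β oneS m h g) (quotientDomain β oneS m h H g⁻¹)
      (quotientDomain β oneS m h H g) := by
  rintro _ ⟨s, hs, rfl⟩
  exact ⟨_, quotientAction_mem hidem hH hs g, quotientAction_mul_inv_oneS hidem h0 hm hH g s⟩

theorem leftInvOn_quotientAction (hidem : IsIdempotentElem oneS) (h0 : h 0 = 1) (hm : 0 < m)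
    (hH : ∀ x, x ∈ H ↔ ∃ i < m, h i = x) (g : G) :
    Set.LeftInvOn (quotientAction β oneS m h g⁻¹) (quotientAction β oneS m h g)
      (quotientDomain β oneS m h H g⁻¹) := by
  rintro _ ⟨s, hs, rfl⟩
  rw [quotientAction_mul_inv_oneS hidem h0 hm hH, quotientAction_mul hidem,
    quotientAction_quotientAction hidem hH hs, quotientAction_quotientAction hidem hH
      (oneS_mem_partialFixedPoints hidem H), inv_mul_cancel, quotientAction_one hidem h0 hm hs,
    quotientAction_one hidem h0 hm (oneS_mem_partialFixedPoints hidem H), mul_comm oneS,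
    quotientAction_mul_oneS hidem, mul_assoc, quotientAction_oneS_mul_self hidem]

theorem bijOn_quotientAction (hidem : IsIdempotentElem oneS) (h0 : h 0 = 1) (hm : 0 < m)
    (hH : ∀ x, x ∈ H ↔ ∃ i < m, h i = x) (g : G) :
    Set.BijOn (quotientAction β oneS m h g) (quotientDomain β oneS m h H g⁻¹)
      (quotientDomain β oneS m h H g) := by
  have hinv := leftInvOn_quotientAction (β := β) hidem h0 hm hH g⁻¹
  have hmaps := mapsTo_quotientAction (β := β) hidem h0 hm hH g⁻¹
  rw [inv_inv] at hinv hmaps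
  exact Set.InvOn.bijOn ⟨leftInvOn_quotientAction hidem h0 hm hH g, hinv⟩
    (mapsTo_quotientAction hidem h0 hm hH g) hmaps

theorem quotientAction_inv_oneS_mul_oneS (hidem : IsIdempotentElem oneS) (h0 : h 0 = 1)
    (hm : 0 < m) (hH : ∀ x, x ∈ H ↔ ∃ i < m, h i = x) (g l : G) :
    quotientAction β oneS m h g
        (quotientAction β oneS m h g⁻¹ oneS * quotientAction β oneS m h l oneS) =
      quotientAction β oneS m h g oneS * quotientAction β oneS m h (g * l) oneS := by
  rw [mul_comm, quotientAction_mul_inv_oneS hidem h0 hm hH,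
    quotientAction_quotientAction hidem hH (oneS_mem_partialFixedPoints hidem H), mul_assoc,
    quotientAction_oneS_mul_self hidem, mul_comm]

theorem quotientAction_quotientAction_mul_inv_oneS (hidem : IsIdempotentElem oneS)
    (h0 : h 0 = 1) (hm : 0 < m) (hH : ∀ x, x ∈ H ↔ ∃ i < m, h i = x) (g l : G) {s : T}
    (hs : s ∈ partialFixedPoints β oneS H) :
    quotientAction β oneS m h g
        (quotientAction β oneS m h l (s * quotientAction β oneS m h l⁻¹ oneS) *
          quotientAction β oneS m h g⁻¹ oneS) =
      quotientAction β oneS m h (g * l) (s * quotientAction β oneS m h (g * l)⁻¹ oneS) *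
        quotientAction β oneS m h g oneS := by
  rw [quotientAction_mul_inv_oneS hidem h0 hm hH, quotientAction_mul_inv_oneS hidem h0 hm hH,
    quotientAction_mul_inv_oneS hidem h0 hm hH, quotientAction_mul hidem,
    quotientAction_quotientAction hidem hH hs,
    quotientAction_quotientAction hidem hH (oneS_mem_partialFixedPoints hidem H)]
  linear_combination quotientAction β oneS m h (g * l) s * quotientAction β oneS m h (g * l) oneS *
    (quotientAction β oneS m h g oneS + 1) * quotientAction_oneS_mul_self hidem g

end Normal

end Glue

theorem stmt_7_general {T : Type*} [CommRing T] {G : Type*} [Group G] [Fintype G]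
    (β : G →* RingAut T) (oneS : T) (hidem : oneS * oneS = oneS)
    (m : ℕ) (hm : 0 < m) (h : ℕ → G) (h1 : h 0 = 1)
    (hmulc : ∀ i < m, ∀ j < m, ∃ k < m, h i * h j = h k)
    (hnormal : ∀ g : G, ∀ i < m, ∃ j < m, g * h i * g⁻¹ = h j)
    (e : ℕ → T)
    (he : ∀ i, e i = (∏ j ∈ Finset.range i, (1 - β (h j) oneS)) * β (h i) oneS)
    (ψ : T → T) (hψ : ∀ t, ψ t = ∑ i ∈ Finset.range m, β (h i) t * e i)
    (eH : T) (heH : eH = ψ oneS)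
    (SaH : T → Prop)
    (hSaH : ∀ s : T, SaH s ↔
      (s * oneS = s ∧ ∀ i < m, β (h i) s * oneS = s * (β (h i) oneS * oneS)))
    (oneTil : G → T) (honeTil : ∀ g : G, oneTil g = β g eH * oneS)
    (Dtil : G → Set T) (hDtil : ∀ g : G, Dtil g = {x : T | ∃ s : T, SaH s ∧ x = s * oneTil g})
    (αTil : G → T → T) (hαTil : ∀ (g : G) (x : T), αTil g x = β g (ψ x) * oneS) :
    -- (a) everything depends only on the coset gH
    (∀ g g' : G, (∃ j < m, g⁻¹ * g' = h j) →
      β g eH = β g' eH ∧ ∀ s : T, SaH s → β g (ψ s) = β g' (ψ s)) ∧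
    -- (b) the 1̃_{gH} are idempotents of S^{α_H}, and 1̃_H = 1_S
    (∀ g : G, oneTil g * oneTil g = oneTil g ∧ SaH (oneTil g)) ∧
    (oneTil 1 = oneS ∧ Dtil 1 = {s : T | SaH s}) ∧
    -- (c) α̃_{gH} : D̃_{g⁻¹H} → D̃_{gH} is an additive multiplicative bijection, α̃_H = id
    (∀ g : G, Set.BijOn (αTil g) (Dtil g⁻¹) (Dtil g)) ∧
    (∀ g : G, ∀ x ∈ Dtil g⁻¹, ∀ y ∈ Dtil g⁻¹,
      αTil g (x + y) = αTil g x + αTil g y ∧ αTil g (x * y) = αTil g x * αTil g y) ∧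
    (∀ s : T, SaH s → αTil 1 s = s) ∧
    -- (d)
    (∀ g l : G, αTil g (oneTil g⁻¹ * oneTil l) = oneTil g * oneTil (g * l)) ∧
    -- (e)
    (∀ g l : G, ∀ s : T, SaH s →
      αTil g (αTil l (s * oneTil l⁻¹) * oneTil g⁻¹) =
        αTil (g * l) (s * oneTil (g * l)⁻¹) * oneTil g) := by
  obtain ⟨H, hH⟩ := Subgroup.exists_forall_mem_iff_of_mul_mem (S := {x | ∃ i < m, h i = x})
    ⟨0, hm, h1⟩ fun _ ⟨i, hi, hia⟩ _ ⟨j, hj, hjb⟩ => by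
      obtain ⟨k, hk, hijk⟩ := hmulc i hi j hj
      exact ⟨k, hk, by rw [← hijk, hia, hjb]⟩
  have : H.Normal := ⟨fun x hx g => by
    obtain ⟨i, hi, rfl⟩ := (hH x).1 hx
    obtain ⟨j, hj, hij⟩ := hnormal g i hi
    exact (hH _).2 ⟨j, hj, hij.symm⟩⟩
  obtain rfl : e = disjointIdem fun i => β (h i) oneS := funext he
  obtain rfl : ψ = glue β oneS m h := funext hψ
  obtain rfl : SaH = (· ∈ partialFixedPoints β oneS H) :=
    funext fun s => propext ((hSaH s).trans (mem_partialFixedPoints_iff hH s).symm)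
  subst heH
  obtain rfl : oneTil = fun g => quotientAction β oneS m h g oneS := funext honeTil
  obtain rfl : αTil = quotientAction β oneS m h := funext fun g => funext (hαTil g)
  obtain rfl : Dtil = quotientDomain β oneS m h H := funext hDtil
  have honeS := oneS_mem_partialFixedPoints (β := β) hidem H
  refine ⟨?_, fun g => ⟨quotientAction_oneS_mul_self hidem g, quotientAction_mem hidem hH honeS g⟩,
    ⟨quotientAction_one hidem h1 hm honeS, quotientDomain_one hidem h1 hm⟩,
    bijOn_quotientAction hidem h1 hm hH,
    fun g x _ y _ => ⟨quotientAction_add g x y, quotientAction_mul hidem g x y⟩,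
    fun s hs => quotientAction_one hidem h1 hm hs, quotientAction_inv_oneS_mul_oneS hidem h1 hm hH,
    fun g l s hs => quotientAction_quotientAction_mul_inv_oneS hidem h1 hm hH g l hs⟩
  rintro g g' ⟨j, hj, hgg'⟩
  obtain rfl : g' = g * h j := by rw [← hgg', mul_inv_cancel_left]
  have hjH := (hH (h j)).2 ⟨j, hj, rfl⟩
  exact ⟨by rw [β_mul_apply, β_glue_oneS hidem hH hjH],
    fun s hs => by rw [β_mul_apply, β_glue hidem hH hs hjH]⟩

/-- Theorem 3.5(i): the data (D̃_{gH}, α̃_{gH}) is a well-defined unital partial action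
of the quotient group G/H on S^{α_H}. -/
theorem stmt_7 {T : Type*} [CommRing T] {G : Type*} [Group G] [Fintype G]
    (β : G →* RingAut T) (oneS : T) (hidem : oneS * oneS = oneS)
    (hglob : ∏ g : G, (1 - β g oneS) = 0)
    (m : ℕ) (hm : 0 < m) (h : ℕ → G) (h1 : h 0 = 1)
    (hinj : ∀ i < m, ∀ j < m, h i = h j → i = j)
    (hmulc : ∀ i < m, ∀ j < m, ∃ k < m, h i * h j = h k)
    (hnormal : ∀ g : G, ∀ i < m, ∃ j < m, g * h i * g⁻¹ = h j)
    (e : ℕ → T)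
    (he : ∀ i, e i = (∏ j ∈ Finset.range i, (1 - β (h j) oneS)) * β (h i) oneS)
    (ψ : T → T) (hψ : ∀ t, ψ t = ∑ i ∈ Finset.range m, β (h i) t * e i)
    (eH : T) (heH : eH = ψ oneS)
    (SaH : T → Prop)
    (hSaH : ∀ s : T, SaH s ↔
      (s * oneS = s ∧ ∀ i < m, β (h i) s * oneS = s * (β (h i) oneS * oneS)))
    (oneTil : G → T) (honeTil : ∀ g : G, oneTil g = β g eH * oneS)
    (Dtil : G → Set T) (hDtil : ∀ g : G, Dtil g = {x : T | ∃ s : T, SaH s ∧ x = s * oneTil g})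
    (αTil : G → T → T) (hαTil : ∀ (g : G) (x : T), αTil g x = β g (ψ x) * oneS) :
    -- (a) everything depends only on the coset gH
    (∀ g g' : G, (∃ j < m, g⁻¹ * g' = h j) →
      β g eH = β g' eH ∧ ∀ s : T, SaH s → β g (ψ s) = β g' (ψ s)) ∧
    -- (b) the 1̃_{gH} are idempotents of S^{α_H}, and 1̃_H = 1_S
    (∀ g : G, oneTil g * oneTil g = oneTil g ∧ SaH (oneTil g)) ∧
    (oneTil 1 = oneS ∧ Dtil 1 = {s : T | SaH s}) ∧
    -- (c) α̃_{gH} : D̃_{g⁻¹H} → D̃_{gH} is an additive multiplicative bijection, α̃_H = id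
    (∀ g : G, Set.BijOn (αTil g) (Dtil g⁻¹) (Dtil g)) ∧
    (∀ g : G, ∀ x ∈ Dtil g⁻¹, ∀ y ∈ Dtil g⁻¹,
      αTil g (x + y) = αTil g x + αTil g y ∧ αTil g (x * y) = αTil g x * αTil g y) ∧
    (∀ s : T, SaH s → αTil 1 s = s) ∧
    -- (d)
    (∀ g l : G, αTil g (oneTil g⁻¹ * oneTil l) = oneTil g * oneTil (g * l)) ∧
    -- (e)
    (∀ g l : G, ∀ s : T, SaH s →
      αTil g (αTil l (s * oneTil l⁻¹) * oneTil g⁻¹) =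
        αTil (g * l) (s * oneTil (g * l)⁻¹) * oneTil g) :=
  stmt_7_general β oneS hidem m hm h h1 hmulc hnormal e he ψ hψ eH heH SaH hSaH oneTil honeTil Dtil
    hDtil αTil hαTil
end

section
/- The pair (T^{β_H}, induced G/H-action of β) together with ψ_H satisfies the globalization conditions for the induced partial action α̃ of G/H on S^{α_H}: (G1) the image ψ_H(S^{α_H}) equals T^{β_H}·e_H, an ideal of the ring T^{β_H}; (G2) ψ_H(D̃_{gH}) = T^{β_H}·e_H·β_g(e_H) = ψ_H(S^{α_H}) ∩ β_g(ψ_H(S^{α_H})) for all g ∈ G; (G3) ψ_H(α̃_{gH}(s·1̃_{g⁻¹H})) = β_g(ψ_H(s·1̃_{g⁻¹H})) for all s ∈ S^{α_H} and g ∈ G. (Theorem 3.5(iii); together with Proposition 3.2 this shows (T^{β_H}, β_{G/H}) is the globalization of (S^{α_H}, α̃_{G/H}).) -/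
/-!
The elements `e_i` disjointify the idempotents `β_{h_i}(1_S)`: they are pairwise orthogonal
idempotents with `β_{h_i}(1_S) e_i = e_i` and `∑ e_i = 1 - ∏ (1 - β_{h_i}(1_S))`. The last
expression is `H`-invariant, since left translation by an element of `H` permutes `H`; so `e_H` is
an `H`-invariant idempotent, and `ψ_H` is multiplicative and absorbs `1_S`.

For `s ∈ S^{α_H}` the condition `β_h(s) 1_S = s 1_h`, transported by `β_{h_i}`, gives
`β_{h_k}(s) β_{h_i}(1_S) = β_{h_i}(s) β_{h_k}(1_S)`, whence `ψ_H(s) β_{h_k}(1_S) = e_H β_{h_k}(s)`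
and `ψ_H(s)` is `H`-invariant. Conversely `ψ_H(t 1_S) = t e_H` for invariant `t`, and `t 1_S`
lies in `S^{α_H}`. This gives (G1). Normality of `H` makes each `β_g` preserve `T^{β_H}`, so
`ψ_H(1̃_{gH}) = β_g(e_H) e_H`, and (G2), (G3) become identities between invariant elements.
-/

open Finset

section DisjointedIdem

variable {R : Type*} [CommRing R] (u : ℕ → R)

def disjointedIdem (i : ℕ) : R := (∏ j ∈ range i, (1 - u j)) * u i

theorem sum_range_disjointedIdem (n : ℕ) :
    ∑ i ∈ range n, disjointedIdem u i = 1 - ∏ j ∈ range n, (1 - u j) := by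
  have hstep : ∀ i ∈ range n, disjointedIdem u i =
      (∏ j ∈ range i, (1 - u j)) - ∏ j ∈ range (i + 1), (1 - u j) := fun i _ => by
    rw [disjointedIdem, prod_range_succ]; ring
  rw [sum_congr rfl hstep, sum_range_sub', prod_range_zero]

variable {u}

theorem isIdempotentElem_disjointedIdem (hu : ∀ j, IsIdempotentElem (u j)) (i : ℕ) :
    IsIdempotentElem (disjointedIdem u i) := by
  have hprod : IsIdempotentElem (∏ j ∈ range i, (1 - u j)) := by
    rw [IsIdempotentElem, ← prod_mul_distrib]
    exact prod_congr rfl fun j _ => (hu j).one_sub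
  exact hprod.mul (hu i)

theorem mul_disjointedIdem_self {i : ℕ} (hu : IsIdempotentElem (u i)) :
    u i * disjointedIdem u i = disjointedIdem u i := by
  rw [disjointedIdem, mul_left_comm, hu.eq]

theorem disjointedIdem_mul_of_lt {i j : ℕ} (hu : IsIdempotentElem (u i)) (hij : i < j) :
    disjointedIdem u i * disjointedIdem u j = 0 := by
  obtain ⟨q, hq⟩ := dvd_prod_of_mem (fun k => 1 - u k) (mem_range.mpr hij)
  rw [disjointedIdem, disjointedIdem, hq]
  linear_combination (∏ k ∈ range i, (1 - u k)) * q * u j * hu.mul_one_sub_self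

theorem disjointedIdem_mul_of_ne (hu : ∀ j, IsIdempotentElem (u j)) {i j : ℕ} (hij : i ≠ j) :
    disjointedIdem u i * disjointedIdem u j = 0 := by
  rcases hij.lt_or_gt with hlt | hlt
  · exact disjointedIdem_mul_of_lt (hu i) hlt
  · rw [mul_comm]; exact disjointedIdem_mul_of_lt (hu j) hlt

theorem sum_mul_disjointedIdem (hu : ∀ j, IsIdempotentElem (u j)) (f : ℕ → R) {n k : ℕ}
    (hk : k < n) :
    (∑ i ∈ range n, f i * disjointedIdem u i) * disjointedIdem u k = f k * disjointedIdem u k := by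
  rw [sum_mul, sum_eq_single_of_mem k (mem_range.mpr hk)
    fun i _ hik => by rw [mul_assoc, disjointedIdem_mul_of_ne hu hik, mul_zero],
    mul_assoc, (isIdempotentElem_disjointedIdem hu k).eq]

end DisjointedIdem

/-- `h 0, …, h (m - 1)` enumerate without repetition a finite multiplicatively closed set, such as
the normal subgroup `H`. -/
structure IsMulClosedEnum {G : Type*} [Mul G] (h : ℕ → G) (m : ℕ) : Prop where
  injOn : ∀ i < m, ∀ j < m, h i = h j → i = j
  mul_mem : ∀ i < m, ∀ j < m, ∃ k < m, h i * h j = h k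

namespace IsMulClosedEnum

variable {G : Type*} [Mul G] [IsLeftCancelMul G] {h : ℕ → G} {m : ℕ}

theorem exists_bijOn_mul_left (hH : IsMulClosedEnum h m) {k : ℕ} (hk : k < m) :
    ∃ σ : ℕ → ℕ, Set.BijOn σ (range m) (range m) ∧ ∀ j < m, h k * h j = h (σ j) := by
  have hex : ∀ j, ∃ l, j < m → l < m ∧ h k * h j = h l := fun j =>
    if hj : j < m then (hH.mul_mem k hk j hj).imp fun _ hl _ => hl
    else ⟨0, fun hj' => absurd hj' hj⟩
  choose σ hσ using hex
  have hmaps : Set.MapsTo σ (range m) (range m) := fun j hj => by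
    simpa using (hσ j (by simpa using hj)).1
  have hinjOn : Set.InjOn σ (range m) := fun a ha b hb hab => by
    rw [coe_range, Set.mem_Iio] at ha hb
    exact hH.injOn a ha b hb (mul_left_cancel (by rw [(hσ a ha).2, (hσ b hb).2, hab]))
  exact ⟨σ, ⟨hmaps, hinjOn, surjOn_of_injOn_of_card_le σ hmaps hinjOn le_rfl⟩,
    fun j hj => (hσ j hj).2⟩

theorem exists_mul_eq (hH : IsMulClosedEnum h m) {i k : ℕ} (hi : i < m) (hk : k < m) :
    ∃ j < m, h i * h j = h k := by
  obtain ⟨σ, hbij, hσ⟩ := hH.exists_bijOn_mul_left hi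
  obtain ⟨j, hj, rfl⟩ := hbij.surjOn (by simpa using hk)
  rw [coe_range, Set.mem_Iio] at hj
  exact ⟨j, hj, hσ j hj⟩

theorem prod_mul_left {M : Type*} [CommMonoid M] (hH : IsMulClosedEnum h m) (f : G → M)
    {k : ℕ} (hk : k < m) :
    ∏ j ∈ range m, f (h k * h j) = ∏ j ∈ range m, f (h j) := by
  obtain ⟨σ, hbij, hσ⟩ := hH.exists_bijOn_mul_left hk
  exact prod_nbij σ (fun j hj => hbij.mapsTo hj) hbij.injOn hbij.surjOn
    fun j hj => by rw [hσ j (mem_range.mp hj)]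

end IsMulClosedEnum

section PsiH

variable {T : Type*} [CommRing T] {G : Type*} [Monoid G]

/-- The map `ψ_H` of the paper, for the enumeration `h 0, …, h (m - 1)` of `H`; its value at `u`
is the idempotent `e_H`. -/
def psiH (β : G →* RingAut T) (u : T) (h : ℕ → G) (m : ℕ) (t : T) : T :=
  ∑ i ∈ range m, β (h i) t * disjointedIdem (fun j => β (h j) u) i

variable {β : G →* RingAut T} {u : T} {h : ℕ → G} {m : ℕ}

theorem map_apply_map (a b : G) (x : T) : β a (β b x) = β (a * b) x := by
  rw [map_mul, RingAut.mul_apply]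

theorem map_mul_disjointedIdem (hu : IsIdempotentElem u) (i : ℕ) :
    β (h i) u * disjointedIdem (fun j => β (h j) u) i = disjointedIdem (fun j => β (h j) u) i :=
  mul_disjointedIdem_self (u := fun j => β (h j) u) (hu.map (β (h i)))

theorem psiH_mul_disjointedIdem (hu : IsIdempotentElem u) (t : T) {k : ℕ} (hk : k < m) :
    psiH β u h m t * disjointedIdem (fun j => β (h j) u) k =
      β (h k) t * disjointedIdem (fun j => β (h j) u) k :=
  sum_mul_disjointedIdem (fun j => hu.map (β (h j))) _ hk

theorem psiH_mul (hu : IsIdempotentElem u) (s t : T) :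
    psiH β u h m (s * t) = psiH β u h m s * psiH β u h m t := by
  rw [psiH, psiH, sum_mul]
  refine sum_congr rfl fun i hi => ?_
  rw [map_mul, mul_assoc, ← psiH_mul_disjointedIdem hu t (mem_range.mp hi)]
  ring

theorem psiH_mul_self (hu : IsIdempotentElem u) (t : T) :
    psiH β u h m (t * u) = psiH β u h m t := by
  refine sum_congr rfl fun i _ => ?_
  rw [map_mul, mul_assoc, map_mul_disjointedIdem hu]

theorem psiH_self (hu : IsIdempotentElem u) :
    psiH β u h m u = 1 - ∏ j ∈ range m, (1 - β (h j) u) := by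
  rw [← sum_range_disjointedIdem]
  exact sum_congr rfl fun i _ => map_mul_disjointedIdem hu i

theorem psiH_mul_psiH_self (hu : IsIdempotentElem u) (t : T) :
    psiH β u h m t * psiH β u h m u = psiH β u h m t := by
  rw [← psiH_mul hu, psiH_mul_self hu]

theorem isIdempotentElem_psiH_self (hu : IsIdempotentElem u) :
    IsIdempotentElem (psiH β u h m u) :=
  psiH_mul_psiH_self hu u

theorem psiH_mul_self_of_fixed {t : T} (ht : ∀ i < m, β (h i) t = t) :
    psiH β u h m (t * u) = t * psiH β u h m u := by
  rw [psiH, psiH, mul_sum]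
  exact sum_congr rfl fun i hi => by rw [map_mul, ht i (mem_range.mp hi), mul_assoc]

theorem mul_psiH_self_eq_of_forall {x y : T} (hxy : ∀ j < m, x * β (h j) u = y * β (h j) u) :
    x * psiH β u h m u = y * psiH β u h m u := by
  simp only [psiH, mul_sum, ← mul_assoc]
  exact sum_congr rfl fun j hj => by rw [hxy j (mem_range.mp hj)]

theorem map_psiH_self [IsLeftCancelMul G] (hH : IsMulClosedEnum h m) (hu : IsIdempotentElem u)
    {k : ℕ} (hk : k < m) : β (h k) (psiH β u h m u) = psiH β u h m u := by
  have hcomp : ∀ j, β (h k) (1 - β (h j) u) = 1 - β (h k * h j) u := fun j => by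
    rw [map_sub, map_one, map_apply_map]
  rw [psiH_self hu, map_sub, map_one, map_prod]
  simp only [hcomp]
  rw [hH.prod_mul_left (fun g => 1 - β g u) hk]

end PsiH

section AlphaHInvariants

variable {T : Type*} [CommRing T] {G : Type*} [Monoid G]

/-- The ring `S^{α_H}` of the paper, as a predicate on `T`, with `u` playing the role of `1_S`. -/
def SAlphaH (β : G →* RingAut T) (u : T) (h : ℕ → G) (m : ℕ) (s : T) : Prop :=
  s * u = s ∧ ∀ i < m, β (h i) s * u = s * (β (h i) u * u)

variable {β : G →* RingAut T} {u : T} {h : ℕ → G} {m : ℕ}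

namespace SAlphaH

theorem map_mul_self {s : T} (hs : SAlphaH β u h m s) {i : ℕ} (hi : i < m) :
    β (h i) s * u = s * β (h i) u := by
  linear_combination hs.2 i hi + β (h i) u * hs.1

theorem map_mul_map_comm [IsLeftCancelMul G] (hH : IsMulClosedEnum h m) {s : T}
    (hs : SAlphaH β u h m s) {i k : ℕ} (hi : i < m) (hk : k < m) :
    β (h k) s * β (h i) u = β (h i) s * β (h k) u := by
  obtain ⟨j, hj, hij⟩ := hH.exists_mul_eq hi hk
  have := congrArg (β (h i)) (hs.map_mul_self hj)
  rwa [map_mul, map_mul, map_apply_map, map_apply_map, hij] at this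

theorem psiH_mul_map [IsLeftCancelMul G] (hH : IsMulClosedEnum h m) (hu : IsIdempotentElem u)
    {s : T} (hs : SAlphaH β u h m s) {k : ℕ} (hk : k < m) :
    psiH β u h m s * β (h k) u = psiH β u h m u * β (h k) s := by
  rw [psiH, psiH, sum_mul, sum_mul]
  refine sum_congr rfl fun i hi => ?_
  calc β (h i) s * disjointedIdem (fun j => β (h j) u) i * β (h k) u
      = β (h k) s * (β (h i) u * disjointedIdem (fun j => β (h j) u) i) := by
        rw [mul_right_comm, ← hs.map_mul_map_comm hH (mem_range.mp hi) hk]; ring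
    _ = _ := by rw [map_mul_disjointedIdem hu]; ring

theorem map_psiH [IsLeftCancelMul G] (hH : IsMulClosedEnum h m) (hu : IsIdempotentElem u)
    {s : T} (hs : SAlphaH β u h m s) {k : ℕ} (hk : k < m) :
    β (h k) (psiH β u h m s) = psiH β u h m s := by
  have hcomm : ∀ j < m, β (h k) (psiH β u h m s) * β (h j) u = psiH β u h m s * β (h j) u := by
    intro j hj
    obtain ⟨l, hl, hkl⟩ := hH.exists_mul_eq hk hj
    have := congrArg (β (h k)) (hs.psiH_mul_map hH hu hl)
    rwa [map_mul, map_mul, map_psiH_self hH hu hk, map_apply_map, map_apply_map, hkl,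
      ← hs.psiH_mul_map hH hu hj] at this
  calc β (h k) (psiH β u h m s)
      = β (h k) (psiH β u h m s) * psiH β u h m u := by
        rw [← map_psiH_self hH hu hk, ← map_mul, psiH_mul_psiH_self hu]
    _ = psiH β u h m s * psiH β u h m u := mul_psiH_self_eq_of_forall hcomm
    _ = psiH β u h m s := psiH_mul_psiH_self hu s

end SAlphaH

theorem sAlphaH_mul_self_of_fixed (hu : IsIdempotentElem u) {t : T}
    (ht : ∀ i < m, β (h i) t = t) : SAlphaH β u h m (t * u) := by
  refine ⟨by rw [mul_assoc, hu.eq], fun i hi => ?_⟩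
  rw [map_mul, ht i hi]
  linear_combination (-(t * β (h i) u)) * hu.eq

end AlphaHInvariants

section Globalization

variable {T : Type*} [CommRing T] {G : Type*} [Group G] {β : G →* RingAut T} {u : T}
  {h : ℕ → G} {m : ℕ}

theorem map_fixed_of_normal
    (hnormal : ∀ g : G, ∀ i < m, ∃ j < m, g * h i * g⁻¹ = h j) (g : G) {t : T}
    (ht : ∀ i < m, β (h i) t = t) {k : ℕ} (hk : k < m) : β (h k) (β g t) = β g t := by
  obtain ⟨j, hj, hje⟩ := hnormal g⁻¹ k hk
  have hkg : h k * g = g * h j := by rw [← hje]; group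
  rw [map_apply_map, hkg, ← map_apply_map, ht j hj]

theorem map_apply_map_inv (g : G) (x : T) : β g (β g⁻¹ x) = x := by
  rw [map_apply_map, mul_inv_cancel, map_one, RingAut.one_apply]

theorem map_fixed_map_psiH_self (hH : IsMulClosedEnum h m) (hu : IsIdempotentElem u)
    (hnormal : ∀ g : G, ∀ i < m, ∃ j < m, g * h i * g⁻¹ = h j) (g : G) {k : ℕ} (hk : k < m) :
    β (h k) (β g (psiH β u h m u)) = β g (psiH β u h m u) :=
  map_fixed_of_normal hnormal g (fun _ hi => map_psiH_self hH hu hi) hk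

theorem setOf_psiH_sAlphaH (hH : IsMulClosedEnum h m) (hu : IsIdempotentElem u) :
    {x : T | ∃ s : T, SAlphaH β u h m s ∧ x = psiH β u h m s} =
      {x : T | ∃ t : T, (∀ i < m, β (h i) t = t) ∧ x = t * psiH β u h m u} := by
  ext x
  constructor
  · rintro ⟨s, hs, rfl⟩
    exact ⟨psiH β u h m s, fun i hi => hs.map_psiH hH hu hi, (psiH_mul_psiH_self hu s).symm⟩
  · rintro ⟨t, ht, rfl⟩
    exact ⟨t * u, sAlphaH_mul_self_of_fixed hu ht, (psiH_mul_self_of_fixed ht).symm⟩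

theorem mul_mem_setOf_psiH_sAlphaH (hH : IsMulClosedEnum h m) (hu : IsIdempotentElem u) {t : T}
    (ht : ∀ i < m, β (h i) t = t) {x : T}
    (hx : x ∈ {x : T | ∃ s : T, SAlphaH β u h m s ∧ x = psiH β u h m s}) :
    t * x ∈ {x : T | ∃ s : T, SAlphaH β u h m s ∧ x = psiH β u h m s} := by
  rw [setOf_psiH_sAlphaH hH hu] at hx ⊢
  obtain ⟨t', ht', rfl⟩ := hx
  exact ⟨t * t', fun i hi => by rw [map_mul, ht i hi, ht' i hi], (mul_assoc _ _ _).symm⟩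

theorem exists_sAlphaH_map_psiH_eq_iff (hH : IsMulClosedEnum h m) (hu : IsIdempotentElem u)
    (hnormal : ∀ g : G, ∀ i < m, ∃ j < m, g * h i * g⁻¹ = h j) (g : G) {x : T} :
    (∃ s : T, SAlphaH β u h m s ∧ x = β g (psiH β u h m s)) ↔
      ∃ t : T, (∀ i < m, β (h i) t = t) ∧ x = t * β g (psiH β u h m u) := by
  constructor
  · rintro ⟨s, hs, rfl⟩
    refine ⟨β g (psiH β u h m s), fun i hi => ?_, ?_⟩
    · exact map_fixed_of_normal hnormal g (fun k hk => hs.map_psiH hH hu hk) hi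
    · rw [← map_mul, psiH_mul_psiH_self hu]
  · rintro ⟨t, ht, rfl⟩
    have ht' : ∀ i < m, β (h i) (β g⁻¹ t) = β g⁻¹ t := fun i hi =>
      map_fixed_of_normal hnormal g⁻¹ ht hi
    refine ⟨β g⁻¹ t * u, sAlphaH_mul_self_of_fixed hu ht', ?_⟩
    rw [psiH_mul_self_of_fixed ht', map_mul, map_apply_map_inv]

theorem psiH_mul_oneTilde (hH : IsMulClosedEnum h m) (hu : IsIdempotentElem u)
    (hnormal : ∀ g : G, ∀ i < m, ∃ j < m, g * h i * g⁻¹ = h j) (g : G) (s : T) :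
    psiH β u h m (s * (β g (psiH β u h m u) * u)) =
      psiH β u h m s * (β g (psiH β u h m u) * psiH β u h m u) := by
  rw [psiH_mul hu, psiH_mul_self_of_fixed fun i hi => map_fixed_map_psiH_self hH hu hnormal g hi]

theorem setOf_psiH_dTilde (hH : IsMulClosedEnum h m) (hu : IsIdempotentElem u)
    (hnormal : ∀ g : G, ∀ i < m, ∃ j < m, g * h i * g⁻¹ = h j) (g : G) :
    {x : T | ∃ d ∈ {x : T | ∃ s : T, SAlphaH β u h m s ∧ x = s * (β g (psiH β u h m u) * u)},
        x = psiH β u h m d} =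
      {x : T | ∃ t : T, (∀ i < m, β (h i) t = t) ∧
        x = t * (psiH β u h m u * β g (psiH β u h m u))} := by
  have he : IsIdempotentElem (psiH β u h m u) := isIdempotentElem_psiH_self hu
  ext x
  constructor
  · rintro ⟨d, ⟨s, hs, rfl⟩, rfl⟩
    refine ⟨psiH β u h m s, fun i hi => hs.map_psiH hH hu hi, ?_⟩
    rw [psiH_mul_oneTilde hH hu hnormal]
    ring
  · rintro ⟨t, ht, rfl⟩
    refine ⟨t * u * (β g (psiH β u h m u) * u), ⟨t * u, sAlphaH_mul_self_of_fixed hu ht, rfl⟩, ?_⟩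
    rw [psiH_mul_oneTilde hH hu hnormal, psiH_mul_self_of_fixed ht]
    linear_combination (-(t * β g (psiH β u h m u))) * he.eq

theorem setOf_psiH_dTilde_eq_inter (hH : IsMulClosedEnum h m) (hu : IsIdempotentElem u)
    (hnormal : ∀ g : G, ∀ i < m, ∃ j < m, g * h i * g⁻¹ = h j) (g : G) :
    {x : T | ∃ d ∈ {x : T | ∃ s : T, SAlphaH β u h m s ∧ x = s * (β g (psiH β u h m u) * u)},
        x = psiH β u h m d} =
      {x : T | ∃ s : T, SAlphaH β u h m s ∧ x = psiH β u h m s} ∩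
        {x : T | ∃ s : T, SAlphaH β u h m s ∧ x = β g (psiH β u h m s)} := by
  have hg : IsIdempotentElem (β g (psiH β u h m u)) :=
    (isIdempotentElem_psiH_self hu).map (β g)
  rw [setOf_psiH_dTilde hH hu hnormal, setOf_psiH_sAlphaH hH hu]
  ext x
  simp only [Set.mem_inter_iff, Set.mem_ofPred_eq, exists_sAlphaH_map_psiH_eq_iff hH hu hnormal]
  constructor
  · rintro ⟨t, ht, rfl⟩
    refine ⟨⟨t * β g (psiH β u h m u), fun i hi => ?_, by ring⟩,
      ⟨t * psiH β u h m u, fun i hi => ?_, by ring⟩⟩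
    · rw [map_mul, ht i hi, map_fixed_map_psiH_self hH hu hnormal g hi]
    · rw [map_mul, ht i hi, map_psiH_self hH hu hi]
  · rintro ⟨⟨t, ht, rfl⟩, ⟨t', -, hx⟩⟩
    refine ⟨t, ht, ?_⟩
    linear_combination (1 - β g (psiH β u h m u)) * hx - t' * hg.eq

theorem psiH_map_psiH_mul_self (hH : IsMulClosedEnum h m) (hu : IsIdempotentElem u)
    (hnormal : ∀ g : G, ∀ i < m, ∃ j < m, g * h i * g⁻¹ = h j) (g : G) {s : T}
    (hs : SAlphaH β u h m s) :
    psiH β u h m (β g (psiH β u h m (s * (β g⁻¹ (psiH β u h m u) * u))) * u) =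
      β g (psiH β u h m (s * (β g⁻¹ (psiH β u h m u) * u))) := by
  have he : IsIdempotentElem (psiH β u h m u) := isIdempotentElem_psiH_self hu
  have hfix : ∀ i < m, β (h i) (β g (psiH β u h m s) * (psiH β u h m u * β g (psiH β u h m u)))
      = β g (psiH β u h m s) * (psiH β u h m u * β g (psiH β u h m u)) := fun i hi => by
    rw [map_mul, map_mul, map_fixed_of_normal hnormal g (fun k hk => hs.map_psiH hH hu hk) hi,
      map_psiH_self hH hu hi, map_fixed_map_psiH_self hH hu hnormal g hi]
  rw [psiH_mul_oneTilde hH hu hnormal, map_mul, map_mul, map_apply_map_inv,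
    psiH_mul_self_of_fixed hfix]
  linear_combination (β g (psiH β u h m s) * β g (psiH β u h m u)) * he.eq

end Globalization

theorem stmt_9_general {T : Type*} [CommRing T] {G : Type*} [Group G]
    (β : G →* RingAut T) (oneS : T) (hidem : oneS * oneS = oneS)
    (m : ℕ) (h : ℕ → G)
    (hinj : ∀ i < m, ∀ j < m, h i = h j → i = j)
    (hmulc : ∀ i < m, ∀ j < m, ∃ k < m, h i * h j = h k)
    (hnormal : ∀ g : G, ∀ i < m, ∃ j < m, g * h i * g⁻¹ = h j)
    (e : ℕ → T)
    (he : ∀ i, e i = (∏ j ∈ Finset.range i, (1 - β (h j) oneS)) * β (h i) oneS)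
    (ψ : T → T) (hψ : ∀ t, ψ t = ∑ i ∈ Finset.range m, β (h i) t * e i)
    (eH : T) (heH : eH = ψ oneS)
    (SaH : T → Prop)
    (hSaH : ∀ s : T, SaH s ↔
      (s * oneS = s ∧ ∀ i < m, β (h i) s * oneS = s * (β (h i) oneS * oneS)))
    (oneTil : G → T) (honeTil : ∀ g : G, oneTil g = β g eH * oneS)
    (Dtil : G → Set T) (hDtil : ∀ g : G, Dtil g = {x : T | ∃ s : T, SaH s ∧ x = s * oneTil g})
    (αTil : G → T → T) (hαTil : ∀ (g : G) (x : T), αTil g x = β g (ψ x) * oneS) :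
    -- (G1): ψ_H(S^{α_H}) = T^{β_H}·e_H, an ideal of T^{β_H}
    ({x : T | ∃ s : T, SaH s ∧ x = ψ s} =
      {x : T | ∃ t : T, (∀ i < m, β (h i) t = t) ∧ x = t * eH}) ∧
    (∀ t : T, (∀ i < m, β (h i) t = t) →
      ∀ x ∈ {x : T | ∃ s : T, SaH s ∧ x = ψ s},
        t * x ∈ {x : T | ∃ s : T, SaH s ∧ x = ψ s}) ∧
    -- (G2)
    (∀ g : G,
      ({x : T | ∃ d ∈ Dtil g, x = ψ d} =
        {x : T | ∃ t : T, (∀ i < m, β (h i) t = t) ∧ x = t * (eH * β g eH)}) ∧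
      ({x : T | ∃ d ∈ Dtil g, x = ψ d} =
        {x : T | ∃ s : T, SaH s ∧ x = ψ s} ∩ {x : T | ∃ s : T, SaH s ∧ x = β g (ψ s)})) ∧
    -- (G3)
    (∀ g : G, ∀ s : T, SaH s →
      ψ (αTil g (s * oneTil g⁻¹)) = β g (ψ (s * oneTil g⁻¹))) := by
  obtain rfl : e = disjointedIdem (fun j => β (h j) oneS) := funext he
  obtain rfl : ψ = psiH β oneS h m := funext hψ
  obtain rfl : SaH = SAlphaH β oneS h m := funext fun s => propext (hSaH s)
  subst heH
  obtain rfl := funext honeTil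
  obtain rfl := funext hDtil
  obtain rfl := funext fun g => funext (hαTil g)
  have hH : IsMulClosedEnum h m := ⟨hinj, hmulc⟩
  exact ⟨setOf_psiH_sAlphaH hH hidem, fun t ht x hx => mul_mem_setOf_psiH_sAlphaH hH hidem ht hx,
    fun g => ⟨setOf_psiH_dTilde hH hidem hnormal g, setOf_psiH_dTilde_eq_inter hH hidem hnormal g⟩,
    fun g s hs => psiH_map_psiH_mul_self hH hidem hnormal g hs⟩

/-- Theorem 3.5(iii): (T^{β_H}, β_{G/H}) together with ψ_H satisfies the globalization
conditions (G1)-(G3) for the induced partial action of G/H on S^{α_H}. -/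
theorem stmt_9 {T : Type*} [CommRing T] {G : Type*} [Group G] [Fintype G]
    (β : G →* RingAut T) (oneS : T) (hidem : oneS * oneS = oneS)
    (hglob : ∏ g : G, (1 - β g oneS) = 0)
    (m : ℕ) (hm : 0 < m) (h : ℕ → G) (h1 : h 0 = 1)
    (hinj : ∀ i < m, ∀ j < m, h i = h j → i = j)
    (hmulc : ∀ i < m, ∀ j < m, ∃ k < m, h i * h j = h k)
    (hnormal : ∀ g : G, ∀ i < m, ∃ j < m, g * h i * g⁻¹ = h j)
    (e : ℕ → T)
    (he : ∀ i, e i = (∏ j ∈ Finset.range i, (1 - β (h j) oneS)) * β (h i) oneS)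
    (ψ : T → T) (hψ : ∀ t, ψ t = ∑ i ∈ Finset.range m, β (h i) t * e i)
    (eH : T) (heH : eH = ψ oneS)
    (SaH : T → Prop)
    (hSaH : ∀ s : T, SaH s ↔
      (s * oneS = s ∧ ∀ i < m, β (h i) s * oneS = s * (β (h i) oneS * oneS)))
    (oneTil : G → T) (honeTil : ∀ g : G, oneTil g = β g eH * oneS)
    (Dtil : G → Set T) (hDtil : ∀ g : G, Dtil g = {x : T | ∃ s : T, SaH s ∧ x = s * oneTil g})
    (αTil : G → T → T) (hαTil : ∀ (g : G) (x : T), αTil g x = β g (ψ x) * oneS) :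
    -- (G1): ψ_H(S^{α_H}) = T^{β_H}·e_H, an ideal of T^{β_H}
    ({x : T | ∃ s : T, SaH s ∧ x = ψ s} =
      {x : T | ∃ t : T, (∀ i < m, β (h i) t = t) ∧ x = t * eH}) ∧
    (∀ t : T, (∀ i < m, β (h i) t = t) →
      ∀ x ∈ {x : T | ∃ s : T, SaH s ∧ x = ψ s},
        t * x ∈ {x : T | ∃ s : T, SaH s ∧ x = ψ s}) ∧
    -- (G2)
    (∀ g : G,
      ({x : T | ∃ d ∈ Dtil g, x = ψ d} =
        {x : T | ∃ t : T, (∀ i < m, β (h i) t = t) ∧ x = t * (eH * β g eH)}) ∧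
      ({x : T | ∃ d ∈ Dtil g, x = ψ d} =
        {x : T | ∃ s : T, SaH s ∧ x = ψ s} ∩ {x : T | ∃ s : T, SaH s ∧ x = β g (ψ s)})) ∧
    -- (G3)
    (∀ g : G, ∀ s : T, SaH s →
      ψ (αTil g (s * oneTil g⁻¹)) = β g (ψ (s * oneTil g⁻¹))) :=
  stmt_9_general β oneS hidem m h hinj hmulc hnormal e he ψ hψ eH heH SaH hSaH oneTil honeTil Dtil
    hDtil αTil hαTil
end

section
/- The domain idempotents and partial isomorphisms of the induced partial action of G/H are given explicitly by: (a) β_g(e_H)·1_S = 1_g + Σ_{i=2}^m (∏_{j=2}^{i} (1_S − 1_{g·h_{j−1}}))·1_{g·h_i} for every g ∈ G; and (b) for every g ∈ G and every x ∈ D̃_{g⁻¹H}, β_g(ψ_H(x))·1_S = α_g(x·1_{g⁻¹}) + Σ_{i=2}^m (∏_{j=1}^{i−1} (1_S − 1_{g·h_j}))·α_{g·h_i}(x·1_{(g·h_i)⁻¹}). (Proposition 3.9.) -/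
/-!
Both formulas are direct expansions. Applying `β_g` to `ψ_H(x) = Σ_i β_{h_i}(x) e_i` turns the
`i`-th summand into `β_{g h_i}(x) ∏_{j<i} (1 - β_{g h_j}(1_S)) β_{g h_i}(1_S)`. After multiplying
by the idempotent `1_S`, the factor `1_{(g h_i)⁻¹}` on the right-hand side can be dropped, because
`β_a(x 1_{a⁻¹}) 1_S = β_a(x 1_S) 1_S`. This gives (b), and (a) is the case `x = 1_S`, since
`e_H = ψ_H(1_S)`.
-/

open Finset

namespace PartialActionInduced

variable {T G : Type*} [CommRing T] [Group G]

/-- The idempotent `e_i` of the paper, for the enumeration `h` of `H` and `p = 1_S`. -/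
def orthogonalIdem (β : G →* RingAut T) (p : T) (h : ℕ → G) (i : ℕ) : T :=
  (∏ j ∈ range i, (1 - β (h j) p)) * β (h i) p

/-- The map `ψ_H` of the paper, where `m = |H|`. -/
def psiH (β : G →* RingAut T) (p : T) (h : ℕ → G) (m : ℕ) (t : T) : T :=
  ∑ i ∈ range m, β (h i) t * orthogonalIdem β p h i

theorem ringAut_apply_apply (β : G →* RingAut T) (a b : G) (t : T) :
    β a (β b t) = β (a * b) t := by
  rw [map_mul, RingAut.mul_apply]

theorem map_orthogonalIdem (β : G →* RingAut T) (p : T) (h : ℕ → G) (g : G) (i : ℕ) :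
    β g (orthogonalIdem β p h i) = orthogonalIdem β p (fun j => g * h j) i := by
  simp only [orthogonalIdem, map_mul, map_prod, map_sub, map_one, ringAut_apply_apply]

theorem map_psiH (β : G →* RingAut T) (p : T) (h : ℕ → G) (m : ℕ) (g : G) (t : T) :
    β g (psiH β p h m t) =
      ∑ i ∈ range m, β (g * h i) t * orthogonalIdem β p (fun j => g * h j) i := by
  simp only [psiH, map_sum, map_mul, ringAut_apply_apply, map_orthogonalIdem]

theorem _root_.IsIdempotentElem.prod_range_sub_mul_self {p : T} (hp : IsIdempotentElem p)
    (a : ℕ → T) {i : ℕ} (hi : 0 < i) :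
    ∏ j ∈ range i, (p - a j * p) = p * ∏ j ∈ range i, (1 - a j) := by
  obtain ⟨n, rfl⟩ := Nat.exists_eq_add_one_of_ne_zero hi.ne'
  calc ∏ j ∈ range (n + 1), (p - a j * p)
      = (∏ j ∈ range (n + 1), (1 - a j)) * p ^ #(range (n + 1)) := by
        rw [prod_mul_pow_card]; exact prod_congr rfl fun j _ => by ring
    _ = p * ∏ j ∈ range (n + 1), (1 - a j) := by
        rw [card_range, hp.pow_succ_eq, mul_comm]

theorem map_mul_map_inv_mul {p : T} (hp : IsIdempotentElem p) (β : G →* RingAut T) (a : G)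
    (x : T) : β a (x * (β a⁻¹ p * p)) * p = β a (x * p) * p := by
  have hp' : p * p = p := hp
  simp only [map_mul, ringAut_apply_apply, mul_inv_cancel, map_one, RingAut.one_apply]
  linear_combination β a x * β a p * hp'

theorem map_psiH_mul_idem {p : T} (hp : IsIdempotentElem p) (β : G →* RingAut T) {h : ℕ → G}
    (h1 : h 0 = 1) {m : ℕ} (hm : 0 < m) (g : G) (x : T) :
    β g (psiH β p h m x) * p =
      β g (x * p) * p + ∑ i ∈ Ico 1 m,
        (∏ j ∈ range i, (p - β (g * h j) p * p)) * (β (g * h i) (x * p) * p) := by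
  have hp' : p * p = p := hp
  rw [map_psiH, sum_mul, range_eq_Ico, sum_eq_sum_Ico_succ_bot hm]
  congr 1
  · simp [orthogonalIdem, h1, map_mul]
  · refine sum_congr rfl fun i hi => ?_
    rw [hp.prod_range_sub_mul_self _ (mem_Ico.mp hi).1, orthogonalIdem, map_mul (β (g * h i))]
    linear_combination -(∏ j ∈ range i, (1 - β (g * h j) p)) * β (g * h i) x *
      β (g * h i) p * hp'

end PartialActionInduced

theorem stmt_12_general {T : Type*} [CommRing T] {G : Type*} [Group G]
    (β : G →* RingAut T) (oneS : T) (hidem : oneS * oneS = oneS)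
    (m : ℕ) (hm : 0 < m) (h : ℕ → G) (h1 : h 0 = 1)
    (e : ℕ → T)
    (he : ∀ i, e i = (∏ j ∈ Finset.range i, (1 - β (h j) oneS)) * β (h i) oneS)
    (ψ : T → T) (hψ : ∀ t, ψ t = ∑ i ∈ Finset.range m, β (h i) t * e i)
    (eH : T) (heH : eH = ψ oneS)
    (Dtil : G → Set T) :
    -- (a)
    (∀ g : G, β g eH * oneS =
      β g oneS * oneS + ∑ i ∈ Finset.Ico 1 m,
        (∏ j ∈ Finset.range i, (oneS - β (g * h j) oneS * oneS)) *
          (β (g * h i) oneS * oneS)) ∧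
    -- (b)
    (∀ g : G, ∀ x ∈ Dtil g⁻¹,
      β g (ψ x) * oneS =
        β g (x * (β g⁻¹ oneS * oneS)) * oneS + ∑ i ∈ Finset.Ico 1 m,
          (∏ j ∈ Finset.range i, (oneS - β (g * h j) oneS * oneS)) *
            (β (g * h i) (x * (β (g * h i)⁻¹ oneS * oneS)) * oneS)) := by
  have hψH : ψ = PartialActionInduced.psiH β oneS h m :=
    funext fun t => by
      simp only [hψ, he, PartialActionInduced.psiH, PartialActionInduced.orthogonalIdem]
  subst heH hψH
  refine ⟨fun g => ?_, fun g x _ => ?_⟩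
  · simpa only [hidem] using PartialActionInduced.map_psiH_mul_idem hidem β h1 hm g oneS
  · simpa only [PartialActionInduced.map_mul_map_inv_mul hidem] using
      PartialActionInduced.map_psiH_mul_idem hidem β h1 hm g x

/-- Proposition 3.9: explicit formulas for the domain idempotents and partial
isomorphisms of the induced partial action of G/H. -/
theorem stmt_12 {T : Type*} [CommRing T] {G : Type*} [Group G] [Fintype G]
    (β : G →* RingAut T) (oneS : T) (hidem : oneS * oneS = oneS)
    (hglob : ∏ g : G, (1 - β g oneS) = 0)
    (m : ℕ) (hm : 0 < m) (h : ℕ → G) (h1 : h 0 = 1)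
    (hinj : ∀ i < m, ∀ j < m, h i = h j → i = j)
    (hmulc : ∀ i < m, ∀ j < m, ∃ k < m, h i * h j = h k)
    (hnormal : ∀ g : G, ∀ i < m, ∃ j < m, g * h i * g⁻¹ = h j)
    (e : ℕ → T)
    (he : ∀ i, e i = (∏ j ∈ Finset.range i, (1 - β (h j) oneS)) * β (h i) oneS)
    (ψ : T → T) (hψ : ∀ t, ψ t = ∑ i ∈ Finset.range m, β (h i) t * e i)
    (eH : T) (heH : eH = ψ oneS)
    (SaH : T → Prop)
    (hSaH : ∀ s : T, SaH s ↔
      (s * oneS = s ∧ ∀ i < m, β (h i) s * oneS = s * (β (h i) oneS * oneS)))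
    (oneTil : G → T) (honeTil : ∀ g : G, oneTil g = β g eH * oneS)
    (Dtil : G → Set T) (hDtil : ∀ g : G, Dtil g = {x : T | ∃ s : T, SaH s ∧ x = s * oneTil g})
    (αTil : G → T → T) (hαTil : ∀ (g : G) (x : T), αTil g x = β g (ψ x) * oneS) :
    -- (a)
    (∀ g : G, β g eH * oneS =
      β g oneS * oneS + ∑ i ∈ Finset.Ico 1 m,
        (∏ j ∈ Finset.range i, (oneS - β (g * h j) oneS * oneS)) *
          (β (g * h i) oneS * oneS)) ∧
    -- (b)
    (∀ g : G, ∀ x ∈ Dtil g⁻¹,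
      β g (ψ x) * oneS =
        β g (x * (β g⁻¹ oneS * oneS)) * oneS + ∑ i ∈ Finset.Ico 1 m,
          (∏ j ∈ Finset.range i, (oneS - β (g * h j) oneS * oneS)) *
            (β (g * h i) (x * (β (g * h i)⁻¹ oneS * oneS)) * oneS)) :=
  stmt_12_general β oneS hidem m hm h h1 e he ψ hψ eH heH Dtil
end

section
/- Suppose f : S → S' is a bijection which is additive and multiplicative, with f(1_S) = 1_{S'}, f(s·1_g) = f(s)·1'_g for all s ∈ S, g ∈ G, and f(β_g(s·1_{g⁻¹})·1_S) = β'_g(f(s·1_{g⁻¹}))·1_{S'} for all s ∈ S, g ∈ G (i.e. f is a partial G-isomorphism between the restricted partial actions). Then there exists a ring isomorphism Ψ : T → T' such that Ψ ∘ β_g = β'_g ∘ Ψ for all g ∈ G and Ψ(s) = f(s) for every s ∈ S; in particular Ψ(1_S) = 1_{S'}. (Theorem 4.3, (iii) ⇒ (i).) -/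
/-!
Write `e := 1_S`. The hypothesis `∏_g (1 - β_g e) = 0` has two consequences: an element `t : T`
is determined by its restrictions `β_g(t)·e ∈ S` (`g ∈ G`), and `1 = ∑_g u_g` with
`u_g ∈ β_g(e)·T`. The first says that `Ψ t` can only be the element `t'` with
`β'_g(t')·e' = f(β_g(t)·e)` for all `g`; the second shows that such an element exists, namely
`∑_g β'_g(f(β_g⁻¹(t·u_g)))`. Every property of `Ψ` (additivity, multiplicativity, equivariance,
extending `f`, being inverted by the map built in the same way from `f⁻¹`) can then be checked on
restrictions, where it is the corresponding property of `f`.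
-/

open Finset

lemma exists_sum_mul_eq_one_of_prod_one_sub_eq_zero {ι R : Type*} [Fintype ι] [CommRing R]
    {x : ι → R} (h : ∏ i, (1 - x i) = 0) : ∃ c : ι → R, ∑ i, c i * x i = 1 := by
  rw [← Ideal.mem_span_range_iff_exists_fun, ← Ideal.Quotient.eq_zero_iff_mem]
  have hx : ∀ i, Ideal.Quotient.mk (Ideal.span (Set.range x)) (x i) = 0 := fun i =>
    Ideal.Quotient.eq_zero_iff_mem.2 (Ideal.subset_span ⟨i, rfl⟩)
  simpa [hx] using congrArg (Ideal.Quotient.mk (Ideal.span (Set.range x))) h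

namespace RingAut

variable {G R : Type*} [Group G] [Semiring R] (β : G →* RingAut R)

lemma map_mul_apply (g h : G) (x : R) : β (g * h) x = β g (β h x) := by
  rw [map_mul, mul_apply]

lemma map_inv_apply_apply (g : G) (x : R) : β g⁻¹ (β g x) = x := by
  rw [map_inv, inv_apply, RingEquiv.symm_apply_apply]

lemma apply_map_inv_apply (g : G) (x : R) : β g (β g⁻¹ x) = x := by
  rw [map_inv, inv_apply, RingEquiv.apply_symm_apply]

end RingAut

open RingAut

section Globalization

variable {G T T' : Type*} [Group G] [CommRing T] [CommRing T']
  (β : G →* RingAut T) (β' : G →* RingAut T') {e : T} {e' : T'}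

lemma eq_of_forall_apply_mul_eq [Fintype G] (hglob : ∏ g, (1 - β g e) = 0) {x y : T}
    (h : ∀ g, β g x * e = β g y * e) : x = y := by
  classical
  have hkill : ∀ g, (x - y) * β g e = 0 := fun g => by
    simpa [sub_mul, sub_eq_zero, apply_map_inv_apply] using congrArg (β g) (h g⁻¹)
  have hfix : ∀ s : Finset G, (x - y) * ∏ g ∈ s, (1 - β g e) = x - y := by
    intro s
    induction s using Finset.induction_on with
    | empty => simp
    | insert g s hg ih => rw [prod_insert hg, ← mul_assoc, mul_sub, mul_one, hkill, sub_zero, ih]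
  have := hfix univ
  rwa [hglob, mul_zero, eq_comm, sub_eq_zero] at this

lemma exists_sum_eq_one_and_mul_apply_eq_self [Fintype G] (he : e * e = e)
    (hglob : ∏ g, (1 - β g e) = 0) : ∃ u : G → T, ∑ g, u g = 1 ∧ ∀ g, u g * β g e = u g := by
  obtain ⟨c, hc⟩ := exists_sum_mul_eq_one_of_prod_one_sub_eq_zero hglob
  exact ⟨fun g => c g * β g e, hc, fun g => by rw [mul_assoc, ← map_mul, he]⟩

lemma apply_mul_apply_inv_mul_mul (he : e * e = e) {s : T} (hs : s * e = s) (g : G) :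
    β g (s * (β g⁻¹ e * e)) * e = β g s * e := by
  rw [map_mul, map_mul, apply_map_inv_apply]
  calc β g s * (e * β g e) * e = β g (s * e) * (e * e) := by rw [map_mul]; ring
    _ = β g s * e := by rw [hs, he]

def IsGlobalLift (e : T) (e' : T') (f φ : T → T') : Prop :=
  ∀ (t : T) (g : G), β' g (φ t) * e' = f (β g t * e)

lemma exists_isGlobalLift [Fintype G] (he : e * e = e) (hglob : ∏ g, (1 - β g e) = 0)
    {f : T → T'} (hadd : ∀ s t : T, s * e = s → t * e = t → f (s + t) = f s + f t)
    (hf : ∀ (s : T) (g : G), s * e = s → β' g (f s) * e' = f (β g s * e)) :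
    ∃ φ, IsGlobalLift β β' e e' f φ := by
  obtain ⟨u, hu_sum, hu⟩ := exists_sum_eq_one_and_mul_apply_eq_self β he hglob
  have hf0 : f 0 = 0 := by simpa using hadd 0 0 (zero_mul e) (zero_mul e)
  refine ⟨fun t => ∑ g, β' g (f (β g⁻¹ (t * u g))), fun t h => ?_⟩
  have hS : ∀ g, β g⁻¹ (t * u g) * e = β g⁻¹ (t * u g) := fun g => by
    rw [← map_inv_apply_apply β g e, ← map_mul, mul_assoc, hu]
  calc β' h (∑ g, β' g (f (β g⁻¹ (t * u g)))) * e'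
      = ∑ g, β' (h * g) (f (β g⁻¹ (t * u g))) * e' := by
        simp only [map_sum, sum_mul, map_mul_apply]
    _ = ∑ g, f (β h (t * u g) * e) := sum_congr rfl fun g _ => by
        rw [hf _ _ (hS g), map_mul_apply, apply_map_inv_apply]
    _ = f (∑ g, β h (t * u g) * e) := by
        refine (sum_hom_rel (r := fun x y => x * e = x ∧ f x = y) ⟨zero_mul e, hf0⟩ ?_).2.symm
        rintro g x y ⟨hx, rfl⟩
        have hg : β h (t * u g) * e * e = β h (t * u g) * e := by rw [mul_assoc, he]
        exact ⟨by rw [add_mul, hg, hx], hadd _ _ hg hx⟩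
    _ = f (β h t * e) := by rw [← sum_mul, ← map_sum, ← mul_sum, hu_sum, mul_one]

namespace IsGlobalLift

variable {β β'} {f φ : T → T'}

lemma map_add [Fintype G] (hglob' : ∏ g, (1 - β' g e') = 0) (he : e * e = e)
    (hadd : ∀ s t : T, s * e = s → t * e = t → f (s + t) = f s + f t)
    (hφ : IsGlobalLift β β' e e' f φ) (t u : T) : φ (t + u) = φ t + φ u := by
  refine eq_of_forall_apply_mul_eq β' hglob' fun g => ?_
  have hS : ∀ x : T, β g x * e * e = β g x * e := fun x => by rw [mul_assoc, he]
  rw [hφ, _root_.map_add, add_mul, hadd _ _ (hS t) (hS u), _root_.map_add, add_mul, hφ, hφ]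

lemma map_mul [Fintype G] (hglob' : ∏ g, (1 - β' g e') = 0) (he : e * e = e)
    (he' : e' * e' = e')
    (hmul : ∀ s t : T, s * e = s → t * e = t → f (s * t) = f s * f t)
    (hφ : IsGlobalLift β β' e e' f φ) (t u : T) : φ (t * u) = φ t * φ u := by
  refine eq_of_forall_apply_mul_eq β' hglob' fun g => ?_
  have hS : ∀ x : T, β g x * e * e = β g x * e := fun x => by rw [mul_assoc, he]
  calc β' g (φ (t * u)) * e' = f (β g t * e * (β g u * e)) := by
        rw [hφ, _root_.map_mul, mul_mul_mul_comm, he]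
    _ = (β' g (φ t) * e') * (β' g (φ u) * e') := by rw [hmul _ _ (hS t) (hS u), hφ, hφ]
    _ = β' g (φ t * φ u) * e' := by rw [mul_mul_mul_comm, he', _root_.map_mul]

lemma map_apply [Fintype G] (hglob' : ∏ g, (1 - β' g e') = 0)
    (hφ : IsGlobalLift β β' e e' f φ) (h : G) (t : T) : φ (β h t) = β' h (φ t) :=
  eq_of_forall_apply_mul_eq β' hglob' fun g => by
    rw [hφ, ← map_mul_apply, ← map_mul_apply, hφ]

lemma apply_eq_of_mul_eq_self [Fintype G] (hglob' : ∏ g, (1 - β' g e') = 0)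
    (hf : ∀ (s : T) (g : G), s * e = s → β' g (f s) * e' = f (β g s * e))
    (hφ : IsGlobalLift β β' e e' f φ) {s : T} (hs : s * e = s) : φ s = f s :=
  eq_of_forall_apply_mul_eq β' hglob' fun g => by rw [hφ, hf s g hs]

lemma leftInverse [Fintype G] (hglob : ∏ g, (1 - β g e) = 0) (he : e * e = e)
    {f' ψ : T' → T} (hφ : IsGlobalLift β β' e e' f φ) (hψ : IsGlobalLift β' β e' e f' ψ)
    (hf'f : ∀ s, s * e = s → f' (f s) = s) : Function.LeftInverse ψ φ := fun t =>
  eq_of_forall_apply_mul_eq β hglob fun g => by rw [hψ, hφ, hf'f _ (by rw [mul_assoc, he])]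

end IsGlobalLift

lemma invFunOn_add {f : T → T'} (hbij : Set.BijOn f {s | s * e = s} {s | s * e' = s})
    (hadd : ∀ s t : T, s * e = s → t * e = t → f (s + t) = f s + f t)
    (a b : T') (ha : a * e' = a) (hb : b * e' = b) :
    Function.invFunOn f {s | s * e = s} (a + b) =
      Function.invFunOn f {s | s * e = s} a + Function.invFunOn f {s | s * e = s} b := by
  set f' := Function.invFunOn f {s | s * e = s}
  have hmem : ∀ {a}, a * e' = a → f' a * e = f' a := fun h => hbij.surjOn.mapsTo_invFunOn h
  have hff' : ∀ {a}, a * e' = a → f (f' a) = a := fun h => hbij.surjOn.rightInvOn_invFunOn h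
  have hab : (a + b) * e' = a + b := by rw [add_mul, ha, hb]
  refine hbij.injOn (hmem hab)
    (show (f' a + f' b) * e = f' a + f' b by rw [add_mul, hmem ha, hmem hb]) ?_
  rw [hff' hab, hadd _ _ (hmem ha) (hmem hb), hff' ha, hff' hb]

lemma apply_invFunOn_mul_eq (he : e * e = e) {f : T → T'}
    (hbij : Set.BijOn f {s | s * e = s} {s | s * e' = s})
    (hf : ∀ (s : T) (g : G), s * e = s → β' g (f s) * e' = f (β g s * e))
    (s : T') (g : G) (hs : s * e' = s) :
    β g (Function.invFunOn f {s | s * e = s} s) * e =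
      Function.invFunOn f {s | s * e = s} (β' g s * e') := by
  set f' := Function.invFunOn f {s | s * e = s}
  have hmem : β g (f' s) * e * e = β g (f' s) * e := by rw [mul_assoc, he]
  have h := hf (f' s) g (hbij.surjOn.mapsTo_invFunOn hs)
  rw [hbij.surjOn.rightInvOn_invFunOn hs] at h
  rw [h]
  exact (hbij.injOn.leftInvOn_invFunOn hmem).symm

end Globalization

theorem stmt_15_general {T T' : Type*} [CommRing T] [CommRing T'] {G : Type*} [Group G] [Fintype G]
    (β : G →* RingAut T) (β' : G →* RingAut T')
    (oneS : T) (oneS' : T')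
    (hidem : oneS * oneS = oneS) (hidem' : oneS' * oneS' = oneS')
    (hglob : ∏ g : G, (1 - β g oneS) = 0)
    (hglob' : ∏ g : G, (1 - β' g oneS') = 0)
    -- f is a partial G-isomorphism between the restricted partial actions
    (f : T → T')
    (hbij : Set.BijOn f {s : T | s * oneS = s} {s : T' | s * oneS' = s})
    (hadd : ∀ s t : T, s * oneS = s → t * oneS = t → f (s + t) = f s + f t)
    (hmul : ∀ s t : T, s * oneS = s → t * oneS = t → f (s * t) = f s * f t)
    (hfE : ∀ (s : T) (g : G), s * oneS = s →
      f (s * (β g oneS * oneS)) = f s * (β' g oneS' * oneS'))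
    (hfα : ∀ (s : T) (g : G), s * oneS = s →
      f (β g (s * (β g⁻¹ oneS * oneS)) * oneS) =
        β' g (f (s * (β g⁻¹ oneS * oneS))) * oneS') :
    ∃ Ψ : T ≃+* T',
      (∀ (g : G) (t : T), Ψ (β g t) = β' g (Ψ t)) ∧
      (∀ s : T, s * oneS = s → Ψ s = f s) := by
  have hf : ∀ (s : T) (g : G), s * oneS = s → β' g (f s) * oneS' = f (β g s * oneS) := by
    intro s g hs
    have h := hfα s g hs
    rw [apply_mul_apply_inv_mul_mul β hidem hs, hfE s g⁻¹ hs,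
      apply_mul_apply_inv_mul_mul β' hidem' (hbij.mapsTo hs)] at h
    exact h.symm
  obtain ⟨φ, hφ⟩ := exists_isGlobalLift β β' hidem hglob hadd hf
  obtain ⟨ψ, hψ⟩ := exists_isGlobalLift β' β hidem' hglob' (invFunOn_add hbij hadd)
    (apply_invFunOn_mul_eq β β' hidem hbij hf)
  refine ⟨{ toFun := φ, invFun := ψ
            left_inv := hφ.leftInverse hglob hidem hψ fun s hs =>
              hbij.injOn.leftInvOn_invFunOn hs
            right_inv := hψ.leftInverse hglob' hidem' hφ fun s hs =>
              hbij.surjOn.rightInvOn_invFunOn hs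
            map_mul' := hφ.map_mul hglob' hidem hidem' hmul
            map_add' := hφ.map_add hglob' hidem hadd },
    hφ.map_apply hglob', fun s hs => hφ.apply_eq_of_mul_eq_self hglob' hf hs⟩

/-- Theorem 4.3, (iii) ⇒ (i): a partial G-isomorphism f : S → S' between the restricted
partial actions extends to a G-equivariant ring isomorphism Ψ : T → T' of the
globalizations, with Ψ extending f (in particular Ψ(1_S) = 1_{S'}). -/
theorem stmt_15 {T T' : Type*} [CommRing T] [CommRing T'] {G : Type*} [Group G] [Fintype G]
    (β : G →* RingAut T) (β' : G →* RingAut T')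
    (oneS : T) (oneS' : T')
    (hidem : oneS * oneS = oneS) (hidem' : oneS' * oneS' = oneS')
    (hglob : ∏ g : G, (1 - β g oneS) = 0)
    (hglob' : ∏ g : G, (1 - β' g oneS') = 0)
    -- f is a partial G-isomorphism between the restricted partial actions
    (f : T → T')
    (hbij : Set.BijOn f {s : T | s * oneS = s} {s : T' | s * oneS' = s})
    (hadd : ∀ s t : T, s * oneS = s → t * oneS = t → f (s + t) = f s + f t)
    (hmul : ∀ s t : T, s * oneS = s → t * oneS = t → f (s * t) = f s * f t)
    (hone : f oneS = oneS')
    (hfE : ∀ (s : T) (g : G), s * oneS = s →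
      f (s * (β g oneS * oneS)) = f s * (β' g oneS' * oneS'))
    (hfα : ∀ (s : T) (g : G), s * oneS = s →
      f (β g (s * (β g⁻¹ oneS * oneS)) * oneS) =
        β' g (f (s * (β g⁻¹ oneS * oneS))) * oneS') :
    ∃ Ψ : T ≃+* T',
      (∀ (g : G) (t : T), Ψ (β g t) = β' g (Ψ t)) ∧
      (∀ s : T, s * oneS = s → Ψ s = f s) :=
  stmt_15_general β β' oneS oneS' hidem hidem' hglob hglob' f hbij hadd hmul hfE hfα
end
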